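/- For every integer m ≥ 1, the number of domino tilings of the Aztec diamond AD_m equals the number of m-tuples (P_1,…,P_m) of Schröder-type paths such that, for each 1 ≤ i ≤ m, P_i runs from (−m−1+i, 1/2−i) to (m+1−i, 1/2−i) and never passes strictly below the horizontal line y = 1/2−i, and the paths P_1,…,P_m are pairwise disjoint as subsets of ℝ². -/

import Mathlib

namespace Aztec

/-- A lattice square, identified by its lower-left corner. -/
abbrev Cell : Type := ℤ × ℤ

/-- The unit lattice square with lower-left corner `c` is contained in the
region `{(x, y) : |x| + |y| ≤ m + 1}`, i.e. lies in the Aztec diamond of rank `m`. -/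
def inAD (m : ℕ) (c : Cell) : Prop :=
  max |c.1| |c.1 + 1| + max |c.2| |c.2 + 1| ≤ (m : ℤ) + 1

/-- A domino: either the horizontal `2×1` rectangle made of the lattice squares with
lower-left corners `(a, b)` and `(a+1, b)`, or the vertical `1×2` rectangle made of the
lattice squares with lower-left corners `(a, b)` and `(a, b+1)`. -/
inductive Domino : Type where
  | horiz : ℤ → ℤ → Domino
  | vert : ℤ → ℤ → Domino
deriving DecidableEq

/-- The two lattice squares occupied by a domino. -/
def Domino.cells : Domino → Finset Cell
  | .horiz a b => {(a, b), (a + 1, b)}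
  | .vert a b => {(a, b), (a, b + 1)}

/-- A domino tiling of the Aztec diamond of rank `m`: a set of dominos all of whose
squares lie in the Aztec diamond, such that every square of the Aztec diamond is covered
by exactly one domino. -/
structure Tiling (m : ℕ) where
  dominos : Finset Domino
  inside : ∀ d ∈ dominos, ∀ c ∈ d.cells, inAD m c
  covers : ∀ c : Cell, inAD m c → ∃! d, d ∈ dominos ∧ c ∈ d.cells

/-- The square `[a,a+1] × [b,b+1]` is gray iff `a + b + m` is even. -/
def grayB (m : ℕ) (c : Cell) : Bool := (c.1 + c.2 + (m : ℤ)) % 2 == 0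

/-- The square `[a,a+1] × [b,b+1]` is white iff `a + b + m` is odd. -/
def whiteB (m : ℕ) (c : Cell) : Bool := ! grayB m c

/-- The steps of a Schröder-type path: North-East `(1,1)`, South-East `(1,-1)`,
East `(2,0)`. -/
inductive Step : Type where
  | up : Step
  | down : Step
  | flat : Step
deriving DecidableEq

/-- The displacement vector of a step. -/
def Step.vec : Step → ℝ × ℝ
  | .up => (1, 1)
  | .down => (1, -1)
  | .flat => (2, 0)

/-- The union in `ℝ²` of the segments of a path starting at `p` with the given steps. -/
def pathSet : ℝ × ℝ → List Step → Set (ℝ × ℝ)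
  | p, [] => {p}
  | p, s :: rest => segment ℝ p (p + s.vec) ∪ pathSet (p + s.vec) rest

/-- The endpoint of a path starting at `p` with the given steps. -/
def endpt : ℝ × ℝ → List Step → ℝ × ℝ
  | p, [] => p
  | p, s :: rest => endpt (p + s.vec) rest

/-- The starting point `(-m-1+i, 1/2-i)` of the `i`-th path (`i : Fin m` is 0-indexed,
corresponding to `i+1 ∈ {1, …, m}`). -/
noncomputable def startPt (m : ℕ) (i : Fin m) : ℝ × ℝ :=
  (-(m : ℝ) - 1 + (((i : ℕ) : ℝ) + 1), 1 / 2 - (((i : ℕ) : ℝ) + 1))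

/-- The ending point `(m+1-i, 1/2-i)` of the `i`-th path. -/
noncomputable def finishPt (m : ℕ) (i : Fin m) : ℝ × ℝ :=
  ((m : ℝ) + 1 - (((i : ℕ) : ℝ) + 1), 1 / 2 - (((i : ℕ) : ℝ) + 1))

/-! ### Arithmetic helpers -/

lemma maxAbs (x : ℤ) : max |x| |x+1| = if 0 ≤ x then x + 1 else -x := by
  rcases le_or_gt 0 x with h | h
  · rw [if_pos h, abs_of_nonneg h, abs_of_nonneg (by omega), max_eq_right (by omega)]
  · rw [if_neg (by omega), abs_of_neg h, abs_of_nonpos (by omega), max_eq_left (by omega)]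

lemma inAD_iff {m : ℕ} {x b : ℤ} :
    inAD m (x, b) ↔ (if 0 ≤ x then x + 1 else -x) + (if 0 ≤ b then b + 1 else -b) ≤ (m:ℤ) + 1 := by
  show max _ _ + max _ _ ≤ _ ↔ _
  rw [maxAbs, maxAbs]

instance decInAD {m : ℕ} (c : Cell) : Decidable (inAD m c) := by
  unfold inAD; infer_instance

/-! ### Discrete path layer -/

def dvec : Step → ℤ × ℤ
  | .up => (1, 1)
  | .down => (1, -1)
  | .flat => (2, 0)

lemma dvec_x_pos (s : Step) : 0 < (dvec s).1 := by cases s <;> simp [dvec]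
lemma dvec_x_le (s : Step) : (dvec s).1 ≤ 2 := by cases s <;> simp [dvec]
lemma dvec_y_abs (s : Step) : ¬ 2 ≤ |(dvec s).2| := by cases s <;> simp [dvec]
lemma dvec_parity (s : Step) : ((dvec s).1 + (dvec s).2) % 2 = 0 := by cases s <;> rfl

def dEnd : ℤ × ℤ → List Step → ℤ × ℤ
  | q, [] => q
  | q, s :: L => dEnd (q + dvec s) L

def dPorts : ℤ × ℤ → List Step → List (ℤ × ℤ)
  | q, [] => [q]
  | q, s :: L => q :: dPorts (q + dvec s) L

def stepsAt : ℤ × ℤ → List Step → List ((ℤ × ℤ) × Step)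
  | _, [] => []
  | q, s :: L => (q, s) :: stepsAt (q + dvec s) L

def dF : ℤ × ℤ → List Step → ℤ → ℤ
  | q, [], _ => q.2
  | q, s :: L, x => if x ≤ q.1 + (dvec s).1 then q.2 + (dvec s).2 * (x - q.1) else dF (q + dvec s) L x

@[simp] lemma dEnd_nil (q : ℤ × ℤ) : dEnd q [] = q := rfl
@[simp] lemma dEnd_cons (q : ℤ × ℤ) (s : Step) (L : List Step) :
    dEnd q (s :: L) = dEnd (q + dvec s) L := rfl
@[simp] lemma dPorts_nil (q : ℤ × ℤ) : dPorts q [] = [q] := rfl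
@[simp] lemma dPorts_cons (q : ℤ × ℤ) (s : Step) (L : List Step) :
    dPorts q (s :: L) = q :: dPorts (q + dvec s) L := rfl
@[simp] lemma stepsAt_nil (q : ℤ × ℤ) : stepsAt q [] = [] := rfl
@[simp] lemma stepsAt_cons (q : ℤ × ℤ) (s : Step) (L : List Step) :
    stepsAt q (s :: L) = (q, s) :: stepsAt (q + dvec s) L := rfl
@[simp] lemma dF_nil (q : ℤ × ℤ) (x : ℤ) : dF q [] x = q.2 := rfl
lemma dF_cons (q : ℤ × ℤ) (s : Step) (L : List Step) (x : ℤ) :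
    dF q (s :: L) x =
      if x ≤ q.1 + (dvec s).1 then q.2 + (dvec s).2 * (x - q.1) else dF (q + dvec s) L x := rfl

lemma dEnd_x_ge (q : ℤ × ℤ) (L : List Step) : q.1 ≤ (dEnd q L).1 := by
  induction L generalizing q with
  | nil => simp
  | cons s L ih =>
    have h1 := ih (q + dvec s)
    have h2 := dvec_x_pos s
    simp only [dEnd_cons, Prod.fst_add] at h1 ⊢
    omega

lemma self_mem_dPorts (q : ℤ × ℤ) (L : List Step) : q ∈ dPorts q L := by
  cases L <;> simp

lemma dEnd_mem_dPorts (q : ℤ × ℤ) (L : List Step) : dEnd q L ∈ dPorts q L := by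
  induction L generalizing q with
  | nil => simp
  | cons s L ih => simp [ih (q + dvec s)]

lemma mem_dPorts_x_ge {q r : ℤ × ℤ} {L : List Step} (h : r ∈ dPorts q L) : q.1 ≤ r.1 := by
  induction L generalizing q with
  | nil => simp at h; rw [h]
  | cons s L ih =>
    simp only [dPorts_cons, List.mem_cons] at h
    rcases h with rfl | h
    · omega
    · have h1 := ih h
      have h2 := dvec_x_pos s
      simp only [Prod.fst_add] at h1
      omega

lemma mem_dPorts_x_le {q r : ℤ × ℤ} {L : List Step} (h : r ∈ dPorts q L) :
    r.1 ≤ (dEnd q L).1 := by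
  induction L generalizing q with
  | nil => simp at h; rw [h]; simp
  | cons s L ih =>
    simp only [dPorts_cons, List.mem_cons] at h
    rcases h with rfl | h
    · have h1 := dEnd_x_ge (r + dvec s) L
      have h2 := dvec_x_pos s
      simp only [dEnd_cons, Prod.fst_add] at h1 ⊢
      omega
    · exact ih h

lemma dPorts_parity {q r : ℤ × ℤ} {L : List Step} (h : r ∈ dPorts q L) :
    (r.1 + r.2) % 2 = (q.1 + q.2) % 2 := by
  induction L generalizing q with
  | nil => simp at h; rw [h]
  | cons s L ih =>
    simp only [dPorts_cons, List.mem_cons] at h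
    rcases h with rfl | h
    · rfl
    · have h1 := ih h
      have h2 := dvec_parity s
      simp only [Prod.fst_add, Prod.snd_add] at h1 ⊢
      omega

lemma dF_start (q : ℤ × ℤ) (L : List Step) : dF q L q.1 = q.2 := by
  cases L with
  | nil => rfl
  | cons s L =>
    have hc : q.1 ≤ q.1 + (dvec s).1 := by have := dvec_x_pos s; omega
    rw [dF_cons, if_pos hc]
    ring

lemma dF_ge {q : ℤ × ℤ} {s : Step} {L : List Step} {x : ℤ} (h : q.1 + (dvec s).1 ≤ x) :
    dF q (s :: L) x = dF (q + dvec s) L x := by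
  rw [dF_cons]
  split
  · next hle =>
    have hx : x = q.1 + (dvec s).1 := le_antisymm hle h
    subst hx
    rw [← Prod.fst_add, dF_start]
    simp only [Prod.fst_add, Prod.snd_add]
    cases s <;> simp [dvec] <;> try ring
  · rfl

lemma dF_port {q r : ℤ × ℤ} {L : List Step} (h : r ∈ dPorts q L) : dF q L r.1 = r.2 := by
  induction L generalizing q with
  | nil => simp at h; rw [h, dF_nil]
  | cons s L ih =>
    simp only [dPorts_cons, List.mem_cons] at h
    rcases h with rfl | h
    · exact dF_start _ _
    · rw [dF_ge (by simpa using mem_dPorts_x_ge h)]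
      exact ih h

lemma dF_end (q : ℤ × ℤ) (L : List Step) : dF q L (dEnd q L).1 = (dEnd q L).2 :=
  dF_port (dEnd_mem_dPorts q L)

lemma stepsAt_port_mem {q r : ℤ × ℤ} {s : Step} {L : List Step}
    (h : (r, s) ∈ stepsAt q L) : r ∈ dPorts q L := by
  induction L generalizing q with
  | nil => simp at h
  | cons s' L ih =>
    simp only [stepsAt_cons, List.mem_cons, Prod.mk.injEq] at h
    rcases h with ⟨rfl, rfl⟩ | h
    · simp
    · simp [ih h]

lemma stepsAt_next_mem {q r : ℤ × ℤ} {s : Step} {L : List Step}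
    (h : (r, s) ∈ stepsAt q L) : r + dvec s ∈ dPorts q L := by
  induction L generalizing q with
  | nil => simp at h
  | cons s' L ih =>
    simp only [stepsAt_cons, List.mem_cons, Prod.mk.injEq] at h
    rcases h with ⟨rfl, rfl⟩ | h
    · simp [self_mem_dPorts]
    · simp [ih h]

lemma mem_dPorts_incoming {q r : ℤ × ℤ} {L : List Step} (h : r ∈ dPorts q L) :
    r = q ∨ ∃ r' s', (r', s') ∈ stepsAt q L ∧ r' + dvec s' = r := by
  induction L generalizing q with
  | nil => simp at h; exact Or.inl h
  | cons s L ih =>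
    simp only [dPorts_cons, List.mem_cons] at h
    rcases h with rfl | h
    · exact Or.inl rfl
    · rcases ih h with rfl | ⟨r', s', hmem, hstep⟩
      · exact Or.inr ⟨q, s, by simp⟩
      · exact Or.inr ⟨r', s', by simp [hmem], hstep⟩

lemma mem_dPorts_outgoing {q r : ℤ × ℤ} {L : List Step} (h : r ∈ dPorts q L) :
    r = dEnd q L ∨ ∃ s, (r, s) ∈ stepsAt q L := by
  induction L generalizing q with
  | nil => simp at h; exact Or.inl (by simp [h])
  | cons s L ih =>
    simp only [dPorts_cons, List.mem_cons] at h
    rcases h with rfl | h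
    · exact Or.inr ⟨s, by simp⟩
    · rcases ih h with h' | ⟨s', hmem⟩
      · exact Or.inl (by simp [h'])
      · exact Or.inr ⟨s', by simp [hmem]⟩

lemma stepsAt_dF₁ {q r : ℤ × ℤ} {s : Step} {L : List Step}
    (h : (r, s) ∈ stepsAt q L) : dF q L r.1 = r.2 :=
  dF_port (stepsAt_port_mem h)

lemma stepsAt_dF₂ {q r : ℤ × ℤ} {s : Step} {L : List Step}
    (h : (r, s) ∈ stepsAt q L) : dF q L (r.1 + (dvec s).1) = r.2 + (dvec s).2 := by
  have := dF_port (stepsAt_next_mem h)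
  simpa using this

lemma stepsAt_dF_mid {q r : ℤ × ℤ} {L : List Step}
    (h : (r, .flat) ∈ stepsAt q L) : dF q L (r.1 + 1) = r.2 := by
  induction L generalizing q with
  | nil => simp at h
  | cons s' L ih =>
    simp only [stepsAt_cons, List.mem_cons, Prod.mk.injEq] at h
    rcases h with ⟨rfl, rfl⟩ | h
    · have hc : r.1 + 1 ≤ r.1 + (dvec Step.flat).1 := by simp only [dvec]; omega
      rw [dF_cons, if_pos hc]
      simp [dvec]
    · have hge : q.1 + (dvec s').1 ≤ r.1 := by
        simpa using mem_dPorts_x_ge (stepsAt_port_mem h)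
      rw [dF_ge (by omega)]
      exact ih h
lemma dvec_y_bounds (s : Step) : -1 ≤ (dvec s).2 ∧ (dvec s).2 ≤ 1 := by
  cases s <;> simp [dvec]

lemma dF_cases {q : ℤ × ℤ} {L : List Step} {x : ℤ} (h1 : q.1 ≤ x) (h2 : x ≤ (dEnd q L).1) :
    (x, dF q L x) ∈ dPorts q L ∨
    ((x - 1, dF q L x) ∈ dPorts q L ∧ (x + 1, dF q L x) ∈ dPorts q L ∧
      dF q L (x - 1) = dF q L x ∧ dF q L (x + 1) = dF q L x) := by
  induction L generalizing q with
  | nil =>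
    left
    simp only [dEnd_nil] at h2
    have hx : x = q.1 := le_antisymm h2 h1
    subst hx
    simp
  | cons s L ih =>
    rcases eq_or_lt_of_le h1 with heq | hlt
    · left
      rw [← heq, dF_start]
      simp [self_mem_dPorts]
    · by_cases hge : q.1 + (dvec s).1 ≤ x
      · have hq : (q + dvec s).1 ≤ x := by simp only [Prod.fst_add]; omega
        have h2' : x ≤ (dEnd (q + dvec s) L).1 := by simpa using h2
        rcases ih hq h2' with hport | ⟨hm1, hm2, hv1, hv2⟩
        · left
          rw [dF_ge hge]
          simp [hport]
        · have hx1 : (q + dvec s).1 ≤ x - 1 := mem_dPorts_x_ge hm1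
          right
          rw [dF_ge hge, dF_ge (by simp only [Prod.fst_add] at hx1; omega),
            dF_ge (by omega)]
          exact ⟨by simp [hm1], by simp [hm2], hv1, hv2⟩
      · -- strictly inside a step: must be a flat step, x = q.1 + 1
        have hs : s = .flat := by
          cases s
          · simp [dvec] at hge; omega
          · simp [dvec] at hge; omega
          · rfl
        subst hs
        simp only [dvec] at hge
        have hx : x = q.1 + 1 := by omega
        subst hx
        have hfl : q + dvec Step.flat = (q.1 + 2, q.2) := by rw [Prod.ext_iff]; exact ⟨rfl, add_zero q.2⟩
        have e0 : dF q (Step.flat :: L) (q.1 + 1) = q.2 := by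
          rw [dF_cons, if_pos (by show q.1 + 1 ≤ q.1 + 2; omega)]
          show q.2 + 0 * _ = q.2
          ring
        have e1 : dF q (Step.flat :: L) (q.1 + 1 - 1) = q.2 := by
          have : q.1 + 1 - 1 = q.1 := by omega
          rw [this, dF_start]
        have e2 : dF q (Step.flat :: L) (q.1 + 1 + 1) = q.2 := by
          rw [dF_ge (by show q.1 + 2 ≤ q.1 + 1 + 1; omega)]
          rw [hfl]
          have : q.1 + 1 + 1 = ((q.1 + 2 : ℤ), q.2).1 := by show q.1 + 1 + 1 = q.1 + 2; omega
          rw [this, dF_start]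
        right
        refine ⟨?_, ?_, by rw [e0, e1], by rw [e0, e2]⟩
        · rw [e0]
          have : (q.1 + 1 - 1, q.2) = q := by simp
          rw [this]; exact self_mem_dPorts q _
        · rw [e0]
          have h9 : (q.1 + 1 + 1, q.2) = q + dvec Step.flat := by
            rw [hfl, Prod.mk.injEq]
            constructor <;> omega
          rw [h9]
          simp [self_mem_dPorts]

lemma dF_adj {q : ℤ × ℤ} {L : List Step} {x : ℤ} (h1 : q.1 ≤ x) (h2 : x + 1 ≤ (dEnd q L).1) :
    -1 ≤ dF q L (x + 1) - dF q L x ∧ dF q L (x + 1) - dF q L x ≤ 1 := by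
  induction L generalizing q with
  | nil => simp only [dEnd_nil] at h2; omega
  | cons s L ih =>
    by_cases hge : q.1 + (dvec s).1 ≤ x
    · rw [dF_ge hge, dF_ge (by omega)]
      exact ih (by simp only [Prod.fst_add]; omega) (by simpa using h2)
    · have hle : x + 1 ≤ q.1 + (dvec s).1 := by
        have := dvec_x_le s; omega
      have e1 : dF q (s :: L) (x + 1) = q.2 + (dvec s).2 * (x + 1 - q.1) := by
        rw [dF_cons, if_pos hle]
      have e2 : dF q (s :: L) x = q.2 + (dvec s).2 * (x - q.1) := by
        rw [dF_cons, if_pos (by omega)]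
      have e3 : (dvec s).2 * (x + 1 - q.1) = (dvec s).2 * (x - q.1) + (dvec s).2 := by ring
      have := dvec_y_bounds s
      omega

lemma dF_lip_nat {q : ℤ × ℤ} {L : List Step} {x : ℤ} (n : ℕ) (h1 : q.1 ≤ x)
    (h2 : x + n ≤ (dEnd q L).1) :
    dF q L (x + n) - dF q L x ≤ n ∧ dF q L x - dF q L (x + n) ≤ n := by
  induction n with
  | zero => simp
  | succ k ih =>
    have hcast : ((k + 1 : ℕ) : ℤ) = (k : ℤ) + 1 := by push_cast; ring
    rw [hcast] at h2 ⊢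
    have harg : x + ((k : ℤ) + 1) = (x + k) + 1 := by ring
    rw [harg] at h2 ⊢
    have hk : x + (k : ℤ) ≤ (dEnd q L).1 := by omega
    have h3 := dF_adj (q := q) (L := L) (x := x + k) (by omega) h2
    have h4 := ih hk
    omega

lemma dF_lip {q : ℤ × ℤ} {L : List Step} {x y : ℤ} (h1 : q.1 ≤ x) (hxy : x ≤ y)
    (h2 : y ≤ (dEnd q L).1) :
    dF q L y - dF q L x ≤ y - x ∧ dF q L x - dF q L y ≤ y - x := by
  obtain ⟨n, rfl⟩ : ∃ n : ℕ, y = x + n := ⟨(y - x).toNat, by omega⟩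
  have := dF_lip_nat n h1 h2
  omega

lemma dF_bounds {q : ℤ × ℤ} {L : List Step} {x : ℤ} (h1 : q.1 ≤ x) (h2 : x ≤ (dEnd q L).1) :
    dF q L x ≤ q.2 + (x - q.1) ∧ dF q L x ≤ (dEnd q L).2 + ((dEnd q L).1 - x) ∧
    q.2 - (x - q.1) ≤ dF q L x ∧ (dEnd q L).2 - ((dEnd q L).1 - x) ≤ dF q L x := by
  have hA := dF_lip (q := q) (L := L) (x := q.1) (y := x) le_rfl h1 h2
  have hB := dF_lip (q := q) (L := L) (x := x) (y := (dEnd q L).1) h1 h2 le_rfl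
  rw [dF_start] at hA
  rw [dF_end] at hB
  omega
/-! ### Real layer -/

noncomputable def rp (q : ℤ × ℤ) : ℝ × ℝ := ((q.1 : ℝ), (q.2 : ℝ) + 1/2)

lemma rp_injective : Function.Injective rp := by
  intro a b h
  simp only [rp, Prod.ext_iff] at h
  obtain ⟨h1, h2⟩ := h
  have : a.1 = b.1 := by exact_mod_cast h1
  have : a.2 = b.2 := by
    have : (a.2 : ℝ) = b.2 := by linarith
    exact_mod_cast this
  exact Prod.ext ‹a.1 = b.1› ‹a.2 = b.2›

lemma vec_eq (s : Step) : s.vec = (((dvec s).1 : ℝ), ((dvec s).2 : ℝ)) := by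
  cases s <;> simp [Step.vec, dvec]

lemma vec_x_pos (s : Step) : 0 < (s.vec).1 := by
  cases s <;> norm_num [Step.vec]

lemma rp_add_dvec (q : ℤ × ℤ) (s : Step) : rp (q + dvec s) = rp q + s.vec := by
  rw [vec_eq]
  simp only [rp, Prod.ext_iff, Prod.fst_add, Prod.snd_add]
  constructor <;> push_cast <;> ring

lemma endpt_rp (q : ℤ × ℤ) (L : List Step) : endpt (rp q) L = rp (dEnd q L) := by
  induction L generalizing q with
  | nil => rfl
  | cons s L ih =>
    show endpt (rp q + s.vec) L = _
    rw [← rp_add_dvec, ih]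
    rfl

lemma endpt_x_ge (p : ℝ × ℝ) (L : List Step) : p.1 ≤ (endpt p L).1 := by
  induction L generalizing p with
  | nil => exact le_rfl
  | cons s L ih =>
    have h1 := ih (p + s.vec)
    have h2 := vec_x_pos s
    show p.1 ≤ (endpt (p + s.vec) L).1
    simp only [Prod.fst_add] at h1
    linarith

lemma mem_segment_iff {p v q : ℝ × ℝ} :
    q ∈ segment ℝ p (p + v) ↔ ∃ t : ℝ, 0 ≤ t ∧ t ≤ 1 ∧ q = p + t • v := by
  rw [segment_eq_image']
  constructor
  · rintro ⟨t, ⟨h0, h1⟩, h⟩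
    exact ⟨t, h0, h1, by rw [← h, add_sub_cancel_left]⟩
  · rintro ⟨t, h0, h1, h⟩
    exact ⟨t, ⟨h0, h1⟩, by rw [add_sub_cancel_left, h]⟩

lemma mem_pathSet_x_ge {p q : ℝ × ℝ} {L : List Step} (h : q ∈ pathSet p L) : p.1 ≤ q.1 := by
  induction L generalizing p with
  | nil => simp [pathSet] at h; rw [h]
  | cons s L ih =>
    rcases h with h | h
    · rw [mem_segment_iff] at h
      obtain ⟨t, h0, h1, rfl⟩ := h
      have := vec_x_pos s
      simp only [Prod.fst_add, Prod.smul_fst, smul_eq_mul]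
      nlinarith
    · have h1 := ih h
      have h2 := vec_x_pos s
      simp only [Prod.fst_add] at h1
      linarith

lemma mem_pathSet_x_le {p q : ℝ × ℝ} {L : List Step} (h : q ∈ pathSet p L) :
    q.1 ≤ (endpt p L).1 := by
  induction L generalizing p with
  | nil => simp [pathSet] at h; rw [h]; exact le_rfl
  | cons s L ih =>
    rcases h with h | h
    · rw [mem_segment_iff] at h
      obtain ⟨t, h0, h1, rfl⟩ := h
      have h2 := endpt_x_ge (p + s.vec) L
      have h3 := vec_x_pos s
      show p.1 + _ ≤ (endpt (p + s.vec) L).1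
      simp only [Prod.fst_add] at h2
      simp only [Prod.smul_fst, smul_eq_mul]
      nlinarith
    · exact ih h

lemma mem_pathSet_start {p q : ℝ × ℝ} {L : List Step} (h : q ∈ pathSet p L)
    (hx : q.1 = p.1) : q = p := by
  induction L generalizing p with
  | nil => simpa [pathSet] using h
  | cons s L ih =>
    rcases h with h | h
    · rw [mem_segment_iff] at h
      obtain ⟨t, h0, h1, rfl⟩ := h
      have h3 := vec_x_pos s
      simp only [Prod.fst_add, Prod.smul_fst, smul_eq_mul] at hx
      have ht : t = 0 := by nlinarith
      simp [ht]
    · exfalso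
      have h1 := mem_pathSet_x_ge h
      have h2 := vec_x_pos s
      simp only [Prod.fst_add] at h1
      rw [hx] at h1
      linarith

noncomputable def pathFun : ℝ × ℝ → List Step → ℝ → ℝ
  | p, [], _ => p.2
  | p, s :: L, x =>
      if x ≤ p.1 + (s.vec).1 then p.2 + ((dvec s).2 : ℝ) * (x - p.1) else pathFun (p + s.vec) L x

@[simp] lemma pathFun_nil (p : ℝ × ℝ) (x : ℝ) : pathFun p [] x = p.2 := rfl
lemma pathFun_cons (p : ℝ × ℝ) (s : Step) (L : List Step) (x : ℝ) :
    pathFun p (s :: L) x =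
      if x ≤ p.1 + (s.vec).1 then p.2 + ((dvec s).2 : ℝ) * (x - p.1)
      else pathFun (p + s.vec) L x := rfl

lemma pathFun_start (p : ℝ × ℝ) (L : List Step) : pathFun p L p.1 = p.2 := by
  cases L with
  | nil => rfl
  | cons s L =>
    rw [pathFun_cons, if_pos (by have := vec_x_pos s; linarith)]
    ring

lemma slope_vec (s : Step) : ((dvec s).2 : ℝ) * (s.vec).1 = (s.vec).2 := by
  cases s <;> norm_num [Step.vec, dvec]

lemma pathFun_ge {p : ℝ × ℝ} {s : Step} {L : List Step} {x : ℝ}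
    (h : p.1 + (s.vec).1 ≤ x) : pathFun p (s :: L) x = pathFun (p + s.vec) L x := by
  rw [pathFun_cons]
  split
  · next hle =>
    have hx : x = p.1 + (s.vec).1 := le_antisymm hle h
    subst hx
    have h2 : p.1 + (s.vec).1 = (p + s.vec).1 := by simp
    rw [h2, pathFun_start]
    simp only [Prod.snd_add, ← h2]
    have h3 : p.1 + (s.vec).1 - p.1 = (s.vec).1 := by ring
    rw [h3, slope_vec s]
  · rfl

lemma mem_pathSet_snd {p q : ℝ × ℝ} {L : List Step} (h : q ∈ pathSet p L) :
    q.2 = pathFun p L q.1 := by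
  induction L generalizing p with
  | nil => simp [pathSet] at h; rw [h]; rfl
  | cons s L ih =>
    rcases h with h | h
    · rw [mem_segment_iff] at h
      obtain ⟨t, h0, h1, rfl⟩ := h
      have h3 := vec_x_pos s
      rw [pathFun_cons, if_pos (by simp only [Prod.fst_add, Prod.smul_fst, smul_eq_mul]; nlinarith)]
      simp only [Prod.fst_add, Prod.snd_add, Prod.smul_fst, Prod.smul_snd, smul_eq_mul]
      have h4 : p.1 + t * (s.vec).1 - p.1 = t * (s.vec).1 := by ring
      rw [h4]
      nlinarith [slope_vec s]
    · have h1 := mem_pathSet_x_ge h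
      simp only [Prod.fst_add] at h1
      rw [pathFun_cons]
      rcases lt_or_eq_of_le h1 with h2 | h2
      · rw [if_neg (by push_neg; linarith), ih h]
      · have hq : q = p + s.vec := by
          apply mem_pathSet_start h
          simp only [Prod.fst_add]
          linarith
        rw [if_pos (by linarith)]
        subst hq
        simp only [Prod.fst_add, Prod.snd_add]
        have h3 : p.1 + (s.vec).1 - p.1 = (s.vec).1 := by ring
        rw [h3, slope_vec s]

lemma graph_mem_pathSet {p : ℝ × ℝ} {L : List Step} {x : ℝ} (h1 : p.1 ≤ x)
    (h2 : x ≤ (endpt p L).1) : (x, pathFun p L x) ∈ pathSet p L := by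
  induction L generalizing p with
  | nil =>
    have : x = p.1 := le_antisymm h2 h1
    subst this
    rw [pathFun_nil]
    show (p.1, p.2) ∈ {p}
    simp
  | cons s L ih =>
    by_cases hc : x ≤ p.1 + (s.vec).1
    · left
      rw [mem_segment_iff]
      have h3 := vec_x_pos s
      refine ⟨(x - p.1) / (s.vec).1, div_nonneg (by linarith) h3.le,
        by rw [div_le_one h3]; linarith, ?_⟩
      rw [pathFun_cons, if_pos hc, Prod.ext_iff]
      constructor
      · simp only [Prod.fst_add, Prod.smul_fst, smul_eq_mul]
        field_simp
        ring
      · simp only [Prod.snd_add, Prod.smul_snd, smul_eq_mul]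
        have h5 : (x - p.1) / (s.vec).1 * (s.vec).2
            = (x - p.1) * ((s.vec).2 / (s.vec).1) := by ring
        have h6 : (s.vec).2 / (s.vec).1 = ((dvec s).2 : ℝ) := by
          cases s <;> norm_num [Step.vec, dvec]
        rw [h5, h6]
        ring
    · right
      push_neg at hc
      rw [pathFun_ge hc.le]
      refine ih ?_ (by simpa [endpt] using h2)
      simp only [Prod.fst_add]
      linarith

lemma pathFun_rp {q : ℤ × ℤ} {L : List Step} (k : ℤ) :
    pathFun (rp q) L (k : ℝ) = ((dF q L k : ℤ) : ℝ) + 1/2 := by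
  induction L generalizing q with
  | nil => simp [rp]
  | cons s L ih =>
    rw [pathFun_cons, dF_cons]
    have hveq : (rp q).1 + (s.vec).1 = ((q.1 + (dvec s).1 : ℤ) : ℝ) := by
      simp only [rp, vec_eq]; push_cast; ring
    by_cases hc : k ≤ q.1 + (dvec s).1
    · rw [if_pos (by rw [hveq]; exact_mod_cast hc), if_pos hc]
      show (q.2 : ℝ) + 1/2 + ((dvec s).2 : ℝ) * ((k : ℝ) - (q.1 : ℝ)) = _
      push_cast
      ring
    · rw [if_neg (by rw [hveq]; push_neg; exact_mod_cast lt_of_not_ge hc), if_neg hc,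
        ← rp_add_dvec]
      exact ih
lemma vec_x_cast (s : Step) : (s.vec).1 = ((dvec s).1 : ℝ) := by rw [vec_eq]

lemma pathFun_affine {q : ℤ × ℤ} {L : List Step} {k : ℤ} {x : ℝ}
    (h1 : (k : ℝ) ≤ x) (h2 : x ≤ (k : ℝ) + 1) :
    pathFun (rp q) L x
      = ((k : ℝ) + 1 - x) * pathFun (rp q) L (k : ℝ)
        + (x - (k : ℝ)) * pathFun (rp q) L ((k : ℝ) + 1) := by
  induction L generalizing q with
  | nil => simp only [pathFun_nil]; ring
  | cons s L ih =>
    have hrp : (rp q).1 = (q.1 : ℝ) := rfl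
    rcases le_or_gt (k + 1) (q.1 + (dvec s).1) with hcase | hcase
    · have hr : ((k : ℝ) + 1) ≤ (rp q).1 + (s.vec).1 := by
        rw [hrp, vec_x_cast]
        exact_mod_cast hcase
      have e1 : pathFun (rp q) (s :: L) x = (rp q).2 + ((dvec s).2 : ℝ) * (x - (rp q).1) := by
        rw [pathFun_cons, if_pos (by linarith)]
      have e2 : pathFun (rp q) (s :: L) (k : ℝ)
          = (rp q).2 + ((dvec s).2 : ℝ) * ((k : ℝ) - (rp q).1) := by
        rw [pathFun_cons, if_pos (by linarith)]
      have e3 : pathFun (rp q) (s :: L) ((k : ℝ) + 1)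
          = (rp q).2 + ((dvec s).2 : ℝ) * ((k : ℝ) + 1 - (rp q).1) := by
        rw [pathFun_cons, if_pos hr]
      rw [e1, e2, e3]; ring
    · have hk : (q.1 + (dvec s).1 : ℤ) ≤ k := by omega
      have hr : (rp q).1 + (s.vec).1 ≤ (k : ℝ) := by
        rw [hrp, vec_x_cast]
        exact_mod_cast hk
      rw [pathFun_ge (le_trans hr h1), pathFun_ge hr, pathFun_ge (by linarith),
        ← rp_add_dvec]
      exact ih

lemma sample_mem_pathSet {q : ℤ × ℤ} {L : List Step} {x : ℤ} (h1 : q.1 ≤ x)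
    (h2 : x ≤ (dEnd q L).1) :
    ((x : ℝ), ((dF q L x : ℤ) : ℝ) + 1/2) ∈ pathSet (rp q) L := by
  have h := graph_mem_pathSet (p := rp q) (L := L) (x := (x : ℝ))
    (by show ((q.1 : ℝ)) ≤ (x : ℝ); exact_mod_cast h1)
    (by rw [endpt_rp]; show (x:ℝ) ≤ (((dEnd q L).1 : ℤ) : ℝ); exact_mod_cast h2)
  rwa [pathFun_rp] at h

lemma rp_mem_pathSet {q r : ℤ × ℤ} {L : List Step} (h : r ∈ dPorts q L) :
    rp r ∈ pathSet (rp q) L := by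
  have h' := sample_mem_pathSet (mem_dPorts_x_ge h) (mem_dPorts_x_le h)
  rwa [dF_port h] at h'

lemma pathSet_lb {q : ℤ × ℤ} {L : List Step} {c : ℝ}
    (h : ∀ r ∈ dPorts q L, c ≤ (r.2 : ℝ) + 1/2) :
    ∀ z ∈ pathSet (rp q) L, c ≤ z.2 := by
  induction L generalizing q with
  | nil =>
    intro z hz
    simp only [pathSet, Set.mem_singleton_iff] at hz
    rw [hz]
    exact h q (by simp)
  | cons s L ih =>
    intro z hz
    rcases hz with hz | hz
    · rw [mem_segment_iff] at hz
      obtain ⟨t, h0, h1, rfl⟩ := hz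
      have ha : c ≤ (rp q).2 := h q (self_mem_dPorts q _)
      have hb : c ≤ (rp (q + dvec s)).2 := h (q + dvec s) (by simp [self_mem_dPorts])
      have hc2 : (rp (q + dvec s)).2 = (rp q).2 + (s.vec).2 := by rw [rp_add_dvec]; rfl
      simp only [Prod.snd_add, Prod.smul_snd, smul_eq_mul]
      rcases le_total 0 (s.vec).2 with hv | hv
      · nlinarith [mul_nonneg h0 hv]
      · nlinarith [mul_nonpos_of_nonneg_of_nonpos (by linarith : (0:ℝ) ≤ 1 - t) hv]
    · rw [← rp_add_dvec] at hz
      exact ih (fun r hr => h r (by simp [hr])) z hz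

lemma disjoint_of_gap {qi qj : ℤ × ℤ} {Li Lj : List Step}
    (hne : qj.1 < (dEnd qj Lj).1)
    (hgap : ∀ x : ℤ, qj.1 ≤ x → x ≤ (dEnd qj Lj).1 → dF qj Lj x + 1 ≤ dF qi Li x) :
    Disjoint (pathSet (rp qi) Li) (pathSet (rp qj) Lj) := by
  rw [Set.disjoint_left]
  intro z hzi hzj
  have hx1 : ((qj.1 : ℝ)) ≤ z.1 := mem_pathSet_x_ge hzj
  have hx2 : z.1 ≤ ((dEnd qj Lj).1 : ℝ) := by
    have h := mem_pathSet_x_le hzj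
    rwa [endpt_rp] at h
  obtain ⟨k, hq1, hq2, hr1, hr2⟩ :
      ∃ k : ℤ, qj.1 ≤ k ∧ k + 1 ≤ (dEnd qj Lj).1 ∧ (k : ℝ) ≤ z.1 ∧ z.1 ≤ (k : ℝ) + 1 := by
    have f1 : (⌊z.1⌋ : ℝ) ≤ z.1 := Int.floor_le _
    have f2 : z.1 < (⌊z.1⌋ : ℝ) + 1 := Int.lt_floor_add_one _
    have f3 : qj.1 ≤ ⌊z.1⌋ := Int.le_floor.mpr hx1
    have f4 : ⌊z.1⌋ ≤ (dEnd qj Lj).1 := by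
      have h5 := Int.floor_le_floor (R := ℝ) hx2
      rwa [Int.floor_intCast] at h5
    by_cases hc : ⌊z.1⌋ = (dEnd qj Lj).1
    · refine ⟨⌊z.1⌋ - 1, by omega, by omega, ?_, ?_⟩
      · push_cast; linarith
      · push_cast
        have : z.1 ≤ ((dEnd qj Lj).1 : ℝ) := hx2
        rw [← hc] at this
        push_cast at this
        linarith
    · exact ⟨⌊z.1⌋, f3, by omega, f1, by linarith⟩
  have hy := mem_pathSet_snd hzi
  have hyj := mem_pathSet_snd hzj
  rw [pathFun_affine hr1 hr2] at hy hyj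
  have pr1 : ∀ (q : ℤ × ℤ) (L : List Step),
      pathFun (rp q) L ((k : ℝ) + 1) = ((dF q L (k+1) : ℤ) : ℝ) + 1/2 := by
    intro q L
    rw [show ((k:ℝ) + 1) = (((k + 1 : ℤ) : ℤ) : ℝ) by push_cast; ring, pathFun_rp]
  rw [pathFun_rp, pr1] at hy hyj
  have gc1 : ((dF qj Lj k : ℤ) : ℝ) + 1 ≤ ((dF qi Li k : ℤ) : ℝ) := by
    exact_mod_cast hgap k hq1 (by omega)
  have gc2 : ((dF qj Lj (k+1) : ℤ) : ℝ) + 1 ≤ ((dF qi Li (k+1) : ℤ) : ℝ) := by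
    exact_mod_cast hgap (k + 1) (by omega) hq2
  set α := (k : ℝ) + 1 - z.1 with hα'
  set β := z.1 - (k : ℝ) with hβ'
  have hα : 0 ≤ α := by rw [hα']; linarith
  have hβ : 0 ≤ β := by rw [hβ']; linarith
  have hs : α + β = 1 := by rw [hα', hβ']; ring
  set A := ((dF qi Li k : ℤ) : ℝ)
  set B := ((dF qi Li (k+1) : ℤ) : ℝ)
  set C := ((dF qj Lj k : ℤ) : ℝ)
  set D := ((dF qj Lj (k+1) : ℤ) : ℝ)
  have m1 : α * (C + 1/2) + α ≤ α * (A + 1/2) := by nlinarith [mul_nonneg hα (by linarith : (0:ℝ) ≤ A - C - 1)]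
  have m2 : β * (D + 1/2) + β ≤ β * (B + 1/2) := by nlinarith [mul_nonneg hβ (by linarith : (0:ℝ) ≤ B - D - 1)]
  linarith [hy, hyj, m1, m2, hs]
/-! ### Tiling walk machinery -/

lemma cells_horiz {a b : ℤ} {c : Cell} :
    c ∈ (Domino.horiz a b).cells ↔ c = (a, b) ∨ c = (a + 1, b) := by
  simp [Domino.cells]

lemma cells_vert {a b : ℤ} {c : Cell} :
    c ∈ (Domino.vert a b).cells ↔ c = (a, b) ∨ c = (a, b + 1) := by
  simp [Domino.cells]

lemma inAD_x_le {m : ℕ} {x b : ℤ} (h : inAD m (x, b)) : x ≤ (m : ℤ) - 1 := by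
  rw [inAD_iff] at h; split_ifs at h <;> omega

lemma inAD_x_ge {m : ℕ} {x b : ℤ} (h : inAD m (x, b)) : -(m : ℤ) ≤ x := by
  rw [inAD_iff] at h; split_ifs at h <;> omega

noncomputable def cellDom {m : ℕ} (T : Tiling m) (c : Cell) : Domino :=
  if h : inAD m c then (T.covers c h).exists.choose else Domino.horiz 0 0

lemma cellDom_spec {m : ℕ} (T : Tiling m) {c : Cell} (h : inAD m c) :
    cellDom T c ∈ T.dominos ∧ c ∈ (cellDom T c).cells := by
  rw [cellDom, dif_pos h]
  exact (T.covers c h).exists.choose_spec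

lemma cellDom_eq {m : ℕ} (T : Tiling m) {c : Cell} {d : Domino} (hd : d ∈ T.dominos)
    (hc : c ∈ d.cells) : cellDom T c = d := by
  have hAD : inAD m c := T.inside d hd c hc
  exact (T.covers c hAD).unique (cellDom_spec T hAD) ⟨hd, hc⟩

def stepDomino : (ℤ × ℤ) × Step → Domino
  | (r, .flat) => .horiz r.1 r.2
  | (r, .up) => .vert r.1 r.2
  | (r, .down) => .vert r.1 (r.2 - 1)

lemma arrival_cell_mem (r : ℤ × ℤ) (s : Step) :
    ((r + dvec s).1 - 1, (r + dvec s).2) ∈ (stepDomino (r, s)).cells := by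
  cases s <;>
    (simp [stepDomino, dvec, cells_horiz, cells_vert, Prod.ext_iff]; try omega)

lemma arrival_cell_not_mem (r : ℤ × ℤ) (s : Step) :
    (r + dvec s) ∉ (stepDomino (r, s)).cells := by
  cases s <;>
    (simp [stepDomino, dvec, cells_horiz, cells_vert, Prod.ext_iff]; try omega)

def stepOfD : Domino → ℤ → Step
  | .horiz _ _, _ => .flat
  | .vert _ b', b => if b' = b then .up else .down

def Free {m : ℕ} (T : Tiling m) (q : ℤ × ℤ) : Prop :=
  ∀ d ∈ T.dominos, ¬((q.1 - 1, q.2) ∈ d.cells ∧ q ∈ d.cells)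

lemma free_next {m : ℕ} (T : Tiling m) {d : Domino} (hd : d ∈ T.dominos) {q' : ℤ × ℤ}
    (h1 : (q'.1 - 1, q'.2) ∈ d.cells) (h2 : q' ∉ d.cells) : Free T q' := by
  rintro d' hd' ⟨hc1, hc2⟩
  have e1 := cellDom_eq T hd' hc1
  have e2 := cellDom_eq T hd h1
  have e3 : d' = d := e1.symm.trans e2
  exact h2 (e3 ▸ hc2)

lemma step_spec {m : ℕ} (T : Tiling m) {q : ℤ × ℤ} (hF : Free T q) (hAD : inAD m q) :
    cellDom T q = stepDomino (q, stepOfD (cellDom T q) q.2) ∧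
    Free T (q + dvec (stepOfD (cellDom T q) q.2)) := by
  obtain ⟨hd, hq⟩ := cellDom_spec T hAD
  have key : cellDom T q = stepDomino (q, stepOfD (cellDom T q) q.2) := by
    cases hdom : cellDom T q with
    | horiz a b =>
      rw [hdom] at hq
      rw [cells_horiz] at hq
      have hb : b = q.2 := by
        rcases hq with h | h <;> rw [Prod.ext_iff] at h <;> omega
      have ha : a = q.1 := by
        rcases hq with h | h
        · rw [Prod.ext_iff] at h; omega
        · exfalso
          apply hF (Domino.horiz a b) (hdom ▸ hd)
          constructor
          · rw [cells_horiz]; left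
            rw [Prod.ext_iff] at h ⊢; constructor <;> simp <;> omega
          · rw [cells_horiz]; right; rw [Prod.ext_iff] at h ⊢; omega
      subst ha; subst hb
      rfl
    | vert a b' =>
      rw [hdom] at hq
      rw [cells_vert] at hq
      have ha : a = q.1 := by rcases hq with h | h <;> rw [Prod.ext_iff] at h <;> omega
      rcases hq with h | h
      · have hb : b' = q.2 := by rw [Prod.ext_iff] at h; omega
        subst ha; subst hb
        simp [stepOfD, stepDomino]
      · have hb : b' = q.2 - 1 := by rw [Prod.ext_iff] at h; omega
        subst ha; subst hb
        have : stepOfD (Domino.vert q.1 (q.2 - 1)) q.2 = .down := by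
          rw [stepOfD]; rw [if_neg (by omega)]
        rw [this]
        simp [stepDomino]
  exact ⟨key, free_next T (d := stepDomino (q, stepOfD (cellDom T q) q.2)) (key ▸ hd)
    (arrival_cell_mem q _) (arrival_cell_not_mem q _)⟩

noncomputable def walkAux {m : ℕ} (T : Tiling m) : ℕ → ℤ × ℤ → List Step
  | 0, _ => []
  | n + 1, q =>
      if inAD m q then
        stepOfD (cellDom T q) q.2 ::
          walkAux T n (q + dvec (stepOfD (cellDom T q) q.2))
      else []

@[simp] lemma walkAux_zero {m : ℕ} (T : Tiling m) (q : ℤ × ℤ) : walkAux T 0 q = [] := rfl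

lemma walkAux_succ {m : ℕ} (T : Tiling m) (n : ℕ) (q : ℤ × ℤ) :
    walkAux T (n + 1) q =
      if inAD m q then
        stepOfD (cellDom T q) q.2 ::
          walkAux T n (q + dvec (stepOfD (cellDom T q) q.2))
      else [] := rfl

lemma walk_spec {m : ℕ} (T : Tiling m) : ∀ (n : ℕ) (q : ℤ × ℤ), Free T q →
    (m : ℤ) - q.1 ≤ n →
    (∀ rs ∈ stepsAt q (walkAux T n q),
        inAD m rs.1 ∧ Free T rs.1 ∧ cellDom T rs.1 = stepDomino rs) ∧
    (¬ inAD m (dEnd q (walkAux T n q))) ∧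
    (∀ r ∈ dPorts q (walkAux T n q), Free T r) := by
  intro n
  induction n with
  | zero =>
    intro q hF hfuel
    refine ⟨by simp, ?_, by simp [hF]⟩
    simp only [walkAux_zero, dEnd_nil]
    intro hAD
    have := inAD_x_le (x := q.1) (b := q.2) (by exact hAD)
    omega
  | succ n ih =>
    intro q hF hfuel
    by_cases hAD : inAD m q
    · rw [walkAux_succ, if_pos hAD]
      obtain ⟨hkey, hFnext⟩ := step_spec T hF hAD
      set s := stepOfD (cellDom T q) q.2 with hs
      have hfuel' : (m : ℤ) - (q + dvec s).1 ≤ n := by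
        have h1 := dvec_x_pos s
        have h2 := inAD_x_le (x := q.1) (b := q.2) (by exact hAD)
        simp only [Prod.fst_add]
        omega
      obtain ⟨ihs, ihe, ihp⟩ := ih (q + dvec s) hFnext hfuel'
      refine ⟨?_, by simpa using ihe, ?_⟩
      · intro rs hrs
        rcases List.mem_cons.mp hrs with rfl | hrs
        · exact ⟨hAD, hF, hkey⟩
        · exact ihs rs hrs
      · intro r hr
        rcases List.mem_cons.mp hr with rfl | hr
        · exact hF
        · exact ihp r hr
    · rw [walkAux_succ, if_neg hAD]
      exact ⟨by simp, by simpa using hAD, by simp [hF]⟩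

/-! ### boundary arithmetic -/

lemma left_boundary {m : ℕ} {x b : ℤ} (h1 : inAD m (x, b)) (h2 : ¬ inAD m (x - 1, b))
    (hw : (x + b + m) % 2 = 1) : b ≤ -1 ∧ x = -(m : ℤ) - 1 - b := by
  rw [inAD_iff] at h1 h2
  split_ifs at h1 h2 <;> omega

lemma right_boundary {m : ℕ} {x b : ℤ} (h1 : inAD m (x - 1, b)) (h2 : ¬ inAD m (x, b))
    (hw : (x + b + m) % 2 = 1) : b ≤ -1 ∧ x = (m : ℤ) + 1 + b := by
  rw [inAD_iff] at h1 h2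
  split_ifs at h1 h2 <;> omega
/-! ### Walks of a tiling -/

def qs (m : ℕ) (i : ℤ) : ℤ × ℤ := (i - m, -i - 1)
def qe (m : ℕ) (i : ℤ) : ℤ × ℤ := ((m : ℤ) - i, -i - 1)

@[simp] lemma qs_fst (m : ℕ) (i : ℤ) : (qs m i).1 = i - m := rfl
@[simp] lemma qs_snd (m : ℕ) (i : ℤ) : (qs m i).2 = -i - 1 := rfl
@[simp] lemma qe_fst (m : ℕ) (i : ℤ) : (qe m i).1 = (m : ℤ) - i := rfl
@[simp] lemma qe_snd (m : ℕ) (i : ℤ) : (qe m i).2 = -i - 1 := rfl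

noncomputable def walk {m : ℕ} (T : Tiling m) (i : ℤ) : List Step :=
  walkAux T (2 * m + 2) (qs m i)

noncomputable def predOf {m : ℕ} (T : Tiling m) (r : ℤ × ℤ) : ℤ × ℤ :=
  match cellDom T (r.1 - 1, r.2) with
  | .horiz _ _ => (r.1 - 2, r.2)
  | .vert _ b' => if b' = r.2 then (r.1 - 1, r.2 + 1) else (r.1 - 1, r.2 - 1)

section Walks
variable {m : ℕ} (T : Tiling m)

lemma predOf_horiz {r : ℤ × ℤ} {a b : ℤ} (h : cellDom T (r.1 - 1, r.2) = .horiz a b) :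
    predOf T r = (r.1 - 2, r.2) := by
  unfold predOf
  rw [h]

lemma predOf_vert {r : ℤ × ℤ} {a b' : ℤ} (h : cellDom T (r.1 - 1, r.2) = .vert a b') :
    predOf T r = if b' = r.2 then (r.1 - 1, r.2 + 1) else (r.1 - 1, r.2 - 1) := by
  unfold predOf
  rw [h]

lemma qs_inAD {i : ℤ} (h0 : 0 ≤ i) (h1 : i < m) : inAD m (qs m i) := by
  show inAD m (i - m, -i - 1)
  rw [inAD_iff]; split_ifs <;> omega

lemma qs_left_out {i : ℤ} (h0 : 0 ≤ i) : ¬ inAD m (i - (m : ℤ) - 1, -i - 1) := by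
  rw [inAD_iff]; split_ifs <;> omega

lemma walk_start_free {i : ℤ} (h0 : 0 ≤ i) : Free T (qs m i) := by
  rintro d hd ⟨h1, h2⟩
  have hin := T.inside d hd _ h1
  have he : ((qs m i).1 - 1, (qs m i).2) = (i - (m : ℤ) - 1, -i - 1) := by simp
  rw [he] at hin
  exact qs_left_out h0 hin

lemma walk_facts {i : ℤ} (h0 : 0 ≤ i) :
    (∀ rs ∈ stepsAt (qs m i) (walk T i),
        inAD m rs.1 ∧ Free T rs.1 ∧ cellDom T rs.1 = stepDomino rs) ∧
    (¬ inAD m (dEnd (qs m i) (walk T i))) ∧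
    (∀ r ∈ dPorts (qs m i) (walk T i), Free T r) :=
  walk_spec T (2 * m + 2) (qs m i) (walk_start_free T h0) (by simp; omega)

lemma walk_step_dom {i : ℤ} (h0 : 0 ≤ i) {r : ℤ × ℤ} {s : Step}
    (h : (r, s) ∈ stepsAt (qs m i) (walk T i)) :
    stepDomino (r, s) ∈ T.dominos := by
  obtain ⟨hAD, _, hcd⟩ := (walk_facts T h0).1 (r, s) h
  exact hcd ▸ (cellDom_spec T hAD).1

lemma walk_arrival_inAD {i : ℤ} (h0 : 0 ≤ i) {r : ℤ × ℤ} {s : Step}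
    (h : (r, s) ∈ stepsAt (qs m i) (walk T i)) :
    inAD m ((r + dvec s).1 - 1, (r + dvec s).2) :=
  T.inside _ (walk_step_dom T h0 h) _ (arrival_cell_mem r s)

lemma walk_port_left_inAD {i : ℤ} (h0 : 0 ≤ i) {r : ℤ × ℤ}
    (hr : r ∈ dPorts (qs m i) (walk T i)) (hne : r ≠ qs m i) :
    inAD m (r.1 - 1, r.2) := by
  rcases mem_dPorts_incoming hr with h | ⟨r', s', hst, harr⟩
  · exact absurd h hne
  · rw [← harr]
    exact walk_arrival_inAD T h0 hst

lemma walk_port_parity {i : ℤ} {r : ℤ × ℤ} (hr : r ∈ dPorts (qs m i) (walk T i)) :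
    (r.1 + r.2 + m) % 2 = 1 := by
  have h := dPorts_parity hr
  have h2 : ((qs m i).1 + (qs m i).2) = -(m : ℤ) - 1 := by simp; ring
  rw [h2] at h
  omega

lemma pred_eq {i : ℤ} (h0 : 0 ≤ i) {r : ℤ × ℤ} {s : Step}
    (h : (r, s) ∈ stepsAt (qs m i) (walk T i)) : predOf T (r + dvec s) = r := by
  have hdom := walk_step_dom T h0 h
  have hcd : cellDom T ((r + dvec s).1 - 1, (r + dvec s).2) = stepDomino (r, s) :=
    cellDom_eq T hdom (arrival_cell_mem r s)
  cases s with
  | flat =>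
    rw [predOf_horiz T (by exact hcd), Prod.ext_iff]
    have e1 : (r + dvec .flat).1 = r.1 + 2 := rfl
    have e2 : (r + dvec .flat).2 = r.2 + 0 := rfl
    constructor
    · show (r + dvec Step.flat).1 - 2 = r.1
      omega
    · show (r + dvec Step.flat).2 = r.2
      omega
  | up =>
    rw [predOf_vert T (by exact hcd)]
    have e1 : (r + dvec .up).1 = r.1 + 1 := rfl
    have e2 : (r + dvec .up).2 = r.2 + 1 := rfl
    rw [if_neg (by rw [e2]; omega), Prod.ext_iff]
    constructor
    · show (r + dvec Step.up).1 - 1 = r.1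
      omega
    · show (r + dvec Step.up).2 - 1 = r.2
      omega
  | down =>
    rw [predOf_vert T (by exact hcd)]
    have e1 : (r + dvec .down).1 = r.1 + 1 := rfl
    have e2 : (r + dvec .down).2 = r.2 + -1 := rfl
    rw [if_pos (by rw [e2]; omega), Prod.ext_iff]
    constructor
    · show (r + dvec Step.down).1 - 1 = r.1
      omega
    · show (r + dvec Step.down).2 + 1 = r.2
      omega

set_option maxHeartbeats 800000 in
lemma walks_disjoint {i j : ℤ} (hi : 0 ≤ i) (hij : i < j) (hjm : j < m) :
    ∀ r : ℤ × ℤ, r ∈ dPorts (qs m i) (walk T i) →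
      r ∈ dPorts (qs m j) (walk T j) → False := by
  have key : ∀ (n : ℕ) (r : ℤ × ℤ), r.1 + m ≤ n → r ∈ dPorts (qs m i) (walk T i) →
      r ∈ dPorts (qs m j) (walk T j) → False := by
    intro n
    induction n with
    | zero =>
      intro r hn h1 h2
      have := mem_dPorts_x_ge h2
      simp only [qs_fst] at this
      omega
    | succ n ih =>
      intro r hn h1 h2
      by_cases hqi : r = qs m i
      · rcases mem_dPorts_incoming h2 with hq | ⟨r', s', hst, harr⟩
        · rw [hqi] at hq
          have : i - (m : ℤ) = j - m := by
            have := congrArg Prod.fst hq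
            simpa using this
          omega
        · have hin : inAD m (r.1 - 1, r.2) := by
            rw [← harr]; exact walk_arrival_inAD T (by omega) hst
          rw [hqi] at hin
          have he : ((qs m i).1 - 1, (qs m i).2) = (i - (m : ℤ) - 1, -i - 1) := by simp
          rw [he] at hin
          exact qs_left_out hi hin
      · by_cases hqj : r = qs m j
        · rcases mem_dPorts_incoming h1 with hq | ⟨r', s', hst, harr⟩
          · exact hqi hq
          · have hin : inAD m (r.1 - 1, r.2) := by
              rw [← harr]; exact walk_arrival_inAD T hi hst
            rw [hqj] at hin
            have he : ((qs m j).1 - 1, (qs m j).2) = (j - (m : ℤ) - 1, -j - 1) := by simp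
            rw [he] at hin
            exact qs_left_out (by omega) hin
        · rcases mem_dPorts_incoming h1 with hq | ⟨r1, s1, hst1, harr1⟩
          · exact hqi hq
          rcases mem_dPorts_incoming h2 with hq | ⟨r2, s2, hst2, harr2⟩
          · exact hqj hq
          have e1 : predOf T r = r1 := by rw [← harr1]; exact pred_eq T hi hst1
          have e2 : predOf T r = r2 := by rw [← harr2]; exact pred_eq T (by omega) hst2
          have hr12 : r1 = r2 := by rw [← e1, e2]
          have hm1 : r1 ∈ dPorts (qs m i) (walk T i) := stepsAt_port_mem hst1
          have hm2 : r1 ∈ dPorts (qs m j) (walk T j) := hr12 ▸ stepsAt_port_mem hst2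
          have hx : r1.1 + 1 ≤ r.1 := by
            have hv := dvec_x_pos s1
            have harr1' : r1.1 + (dvec s1).1 = r.1 := by
              rw [← harr1, Prod.fst_add]
            omega
          exact ih r1 (by omega) hm1 hm2
  intro r h1 h2
  have hge := mem_dPorts_x_ge h1
  simp only [qs_fst] at hge
  have hn : r.1 + (m : ℤ) ≤ ((r.1 + (m : ℤ)).toNat : ℤ) := Int.self_le_toNat _
  exact key (r.1 + (m : ℤ)).toNat r hn h1 h2

lemma walk_end_ne_start {i : ℤ} (h0 : 0 ≤ i) (h1 : i < m) :
    dEnd (qs m i) (walk T i) ≠ qs m i := by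
  intro h
  apply (walk_facts T h0).2.1
  rw [h]
  exact qs_inAD h0 h1

lemma walk_exit_form {i : ℤ} (h0 : 0 ≤ i) (h1 : i < m) :
    -(m : ℤ) ≤ (dEnd (qs m i) (walk T i)).2 ∧ (dEnd (qs m i) (walk T i)).2 ≤ -1 ∧
      (dEnd (qs m i) (walk T i)).1 = (m : ℤ) + 1 + (dEnd (qs m i) (walk T i)).2 := by
  set e := dEnd (qs m i) (walk T i) with he
  have hmem : e ∈ dPorts (qs m i) (walk T i) := dEnd_mem_dPorts _ _
  have hout : ¬ inAD m e := (walk_facts T h0).2.1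
  have hleft : inAD m (e.1 - 1, e.2) :=
    walk_port_left_inAD T h0 hmem (walk_end_ne_start T h0 h1)
  have hpar : (e.1 + e.2 + m) % 2 = 1 := walk_port_parity T hmem
  have hout' : ¬ inAD m (e.1, e.2) := hout
  have hrb := right_boundary hleft hout' hpar
  refine ⟨?_, hrb.1, hrb.2⟩
  rw [inAD_iff] at hleft
  split_ifs at hleft <;> omega

end Walks
section Walks2
variable {m : ℕ} (T : Tiling m)

lemma walk_port_cell_inAD {i : ℤ} (h0 : 0 ≤ i) {r : ℤ × ℤ}
    (hr : r ∈ dPorts (qs m i) (walk T i))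
    (hne : r.1 < (dEnd (qs m i) (walk T i)).1) : inAD m r := by
  rcases mem_dPorts_outgoing hr with he | ⟨s, hs⟩
  · rw [he] at hne; omega
  · exact ((walk_facts T h0).1 (r, s) hs).1

lemma walk_mid_flat {i : ℤ} (h0 : 0 ≤ i) {x b : ℤ}
    (hp1 : (x - 1, b) ∈ dPorts (qs m i) (walk T i))
    (hlt : x - 1 < (dEnd (qs m i) (walk T i)).1)
    (hv : dF (qs m i) (walk T i) x = b) :
    ((x - 1, b), Step.flat) ∈ stepsAt (qs m i) (walk T i) := by
  rcases mem_dPorts_outgoing hp1 with he | ⟨s, hs⟩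
  · exfalso
    have h3 : x - 1 = (dEnd (qs m i) (walk T i)).1 := congrArg Prod.fst he
    omega
  · cases s with
    | up =>
      exfalso
      have h2 : dF (qs m i) (walk T i) (x - 1 + 1) = b + 1 := stepsAt_dF₂ hs
      rw [show x - 1 + 1 = x by ring, hv] at h2
      omega
    | down =>
      exfalso
      have h2 : dF (qs m i) (walk T i) (x - 1 + 1) = b + -1 := stepsAt_dF₂ hs
      rw [show x - 1 + 1 = x by ring, hv] at h2
      omega
    | flat => exact hs

lemma walk_sample_port {i : ℤ} (h0 : 0 ≤ i) {x : ℤ}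
    (hx1 : i - m ≤ x) (hx2 : x ≤ (dEnd (qs m i) (walk T i)).1)
    (hpar : (x + dF (qs m i) (walk T i) x + m) % 2 = 1) :
    (x, dF (qs m i) (walk T i) x) ∈ dPorts (qs m i) (walk T i) := by
  rcases dF_cases (show (qs m i).1 ≤ x by simp only [qs_fst]; omega) hx2 with hport | ⟨hm1, _, _, _⟩
  · exact hport
  · exfalso
    have h9 : (x - 1 + dF (qs m i) (walk T i) x + (m : ℤ)) % 2 = 1 :=
      walk_port_parity T hm1
    omega

lemma walk_sample_mid {i : ℤ} (h0 : 0 ≤ i) {x : ℤ}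
    (hx1 : i - m ≤ x) (hx2 : x ≤ (dEnd (qs m i) (walk T i)).1)
    (hpar : (x + dF (qs m i) (walk T i) x + m) % 2 = 0) :
    (x - 1, dF (qs m i) (walk T i) x) ∈ dPorts (qs m i) (walk T i) ∧
    (x + 1, dF (qs m i) (walk T i) x) ∈ dPorts (qs m i) (walk T i) ∧
    dF (qs m i) (walk T i) (x - 1) = dF (qs m i) (walk T i) x ∧
    dF (qs m i) (walk T i) (x + 1) = dF (qs m i) (walk T i) x := by
  rcases dF_cases (show (qs m i).1 ≤ x by simp only [qs_fst]; omega) hx2 with hport | hmid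
  · exfalso
    have h9 : (x + dF (qs m i) (walk T i) x + (m : ℤ)) % 2 = 1 :=
      walk_port_parity T hport
    omega
  · exact hmid

lemma walk_sample_cell {i : ℤ} (h0 : 0 ≤ i) (h1 : i < m) {x : ℤ}
    (hx1 : i - m ≤ x) (hx2 : x ≤ (dEnd (qs m i) (walk T i)).1) :
    inAD m (x, dF (qs m i) (walk T i) x) ∨
      (x = (dEnd (qs m i) (walk T i)).1 ∧
        inAD m (x - 1, dF (qs m i) (walk T i) x)) := by
  set b := dF (qs m i) (walk T i) x with hb
  rcases dF_cases (show (qs m i).1 ≤ x by simp only [qs_fst]; omega) hx2 with hport | ⟨hm1, hm2, _, _⟩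
  · by_cases he : (x, b) = dEnd (qs m i) (walk T i)
    · right
      have hx : x = (dEnd (qs m i) (walk T i)).1 := congrArg Prod.fst he
      refine ⟨hx, ?_⟩
      have hne : (x, b) ≠ qs m i := by
        rw [he]; exact walk_end_ne_start T h0 h1
      have := walk_port_left_inAD T h0 hport hne
      simpa using this
    · left
      have hlt : x < (dEnd (qs m i) (walk T i)).1 := by
        rcases lt_or_eq_of_le hx2 with h | h
        · exact h
        · exfalso
          apply he
          rw [Prod.ext_iff]
          refine ⟨h, ?_⟩
          show b = (dEnd (qs m i) (walk T i)).2
          rw [hb, h]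
          exact dF_end _ _
      exact walk_port_cell_inAD T h0 hport (by simpa using hlt)
  · left
    have hlt : x - 1 < (dEnd (qs m i) (walk T i)).1 := by
      have h5 : x + 1 ≤ (dEnd (qs m i) (walk T i)).1 := mem_dPorts_x_le hm2
      omega
    have hflat := walk_mid_flat T h0 hm1 hlt hb.symm
    have hdom := walk_step_dom T h0 hflat
    have hcell : ((x : ℤ), b) ∈ (stepDomino ((x - 1, b), Step.flat)).cells := by
      show _ ∈ (Domino.horiz (x - 1) b).cells
      rw [cells_horiz]
      right
      rw [Prod.ext_iff]
      exact ⟨by show x = x - 1 + 1; omega, rfl⟩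
    exact T.inside _ hdom _ hcell

lemma walk_sample_lb {i : ℤ} (h0 : 0 ≤ i) (h1 : i < m) {x : ℤ}
    (hx1 : i - m ≤ x) (hx2 : x ≤ (dEnd (qs m i) (walk T i)).1) :
    (x - m - 1 ≤ dF (qs m i) (walk T i) x ∧ -x - m - 1 ≤ dF (qs m i) (walk T i) x) ∧
      (x = 0 → -(m : ℤ) ≤ dF (qs m i) (walk T i) x) := by
  rcases walk_sample_cell T h0 h1 hx1 hx2 with h | ⟨hxe, h⟩
  · rw [inAD_iff] at h
    refine ⟨⟨?_, ?_⟩, fun hx0 => ?_⟩ <;> (split_ifs at h <;> omega)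
  · have hef := walk_exit_form T h0 h1
    have hDF : dF (qs m i) (walk T i) x = (dEnd (qs m i) (walk T i)).2 := by
      rw [hxe]; exact dF_end _ _
    refine ⟨⟨?_, ?_⟩, fun hx0 => ?_⟩ <;> omega

end Walks2
section Walks3
variable {m : ℕ} (T : Tiling m)

lemma walk_gap {i j : ℤ} (hi : 0 ≤ i) (hij : i < j) (hjm : j < m) :
    ∀ x : ℤ, j - m ≤ x → x ≤ (dEnd (qs m j) (walk T j)).1 →
      x ≤ (dEnd (qs m i) (walk T i)).1 →
      dF (qs m j) (walk T j) x + 1 ≤ dF (qs m i) (walk T i) x := by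
  have hj0 : 0 ≤ j := by omega
  have him : i < m := by omega
  have main : ∀ n : ℕ, ∀ x : ℤ, x = j - m + n →
      x ≤ (dEnd (qs m j) (walk T j)).1 → x ≤ (dEnd (qs m i) (walk T i)).1 →
      dF (qs m j) (walk T j) x + 1 ≤ dF (qs m i) (walk T i) x := by
    intro n
    induction n with
    | zero =>
      intro x hx hxj hxi
      push_cast at hx
      have hx0 : x = j - m := by omega
      subst hx0
      have hFj : dF (qs m j) (walk T j) (j - m) = -j - 1 := by
        have h := dF_start (qs m j) (walk T j)
        simpa using h
      have hlb := (walk_sample_lb T hi him (x := j - m) (by omega) hxi).1.2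
      have hne : dF (qs m i) (walk T i) (j - m) ≠ -j - 1 := by
        intro heq
        rcases dF_cases (q := qs m i) (L := walk T i) (x := j - m)
            (by simp only [qs_fst]; omega) hxi with hport | ⟨hm1, hm2, _, _⟩
        · rw [heq] at hport
          exact walks_disjoint T hi hij hjm (j - m, -j - 1) hport
            (self_mem_dPorts (qs m j) (walk T j))
        · rw [heq] at hm1 hm2
          have hlt : j - m - 1 < (dEnd (qs m i) (walk T i)).1 := by
            have h5 : ((j - m + 1 : ℤ), (-j - 1 : ℤ)).1 ≤ (dEnd (qs m i) (walk T i)).1 :=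
              mem_dPorts_x_le hm2
            simp only at h5
            omega
          have hin := walk_port_cell_inAD T hi hm1 (by simpa using hlt)
          rw [inAD_iff] at hin
          split_ifs at hin <;> omega
      omega
    | succ n ih =>
      intro x hx hxj hxi
      push_cast at hx
      have hprev := ih (x - 1) (by push_cast; omega) (by omega) (by omega)
      have hadji := dF_adj (q := qs m i) (L := walk T i) (x := x - 1)
        (by simp only [qs_fst]; omega) (by omega)
      have hadjj := dF_adj (q := qs m j) (L := walk T j) (x := x - 1)
        (by simp only [qs_fst]; omega) (by omega)
      rw [show x - 1 + 1 = x by ring] at hadji hadjj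
      by_contra hcon
      push_neg at hcon
      rcases eq_or_lt_of_le (by omega : dF (qs m i) (walk T i) x ≤ dF (qs m j) (walk T j) x)
        with heq | hlt2
      · rcases Int.emod_two_eq (x + dF (qs m i) (walk T i) x + m) with hpar | hpar
        · -- both mid at x : values at x-1 equal values at x
          have hmidi := walk_sample_mid T hi (x := x) (by omega) hxi hpar
          have hmidj := walk_sample_mid T hj0 (x := x) (by omega) hxj (by omega)
          omega
        · -- both ports at x : shared port
          have hpi := walk_sample_port T hi (x := x) (by omega) hxi hpar
          have hpj := walk_sample_port T hj0 (x := x) (by omega) hxj (by omega)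
          rw [← heq] at hpj
          exact walks_disjoint T hi hij hjm _ hpi hpj
      · -- crossing pattern
        rcases Int.emod_two_eq (x - 1 + dF (qs m i) (walk T i) (x - 1) + m) with hpar | hpar
        · have hmidi := walk_sample_mid T hi (x := x - 1) (by omega) (by omega) hpar
          rw [show x - 1 + 1 = x by ring] at hmidi
          omega
        · have hmidj := walk_sample_mid T hj0 (x := x - 1) (by omega) (by omega) (by omega)
          rw [show x - 1 + 1 = x by ring] at hmidj
          omega
  intro x hx1 hx2 hx3
  exact main (x - (j - m)).toNat x (by omega) hx2 hx3

lemma walk_exit_lt {i j : ℤ} (hi : 0 ≤ i) (hij : i < j) (hjm : j < m) :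
    (dEnd (qs m j) (walk T j)).2 < (dEnd (qs m i) (walk T i)).2 := by
  by_contra hcon
  push_neg at hcon
  have hefi := walk_exit_form T hi (by omega)
  have hefj := walk_exit_form T (by omega) hjm
  have hgap := walk_gap T hi hij hjm (dEnd (qs m i) (walk T i)).1 (by omega) (by omega)
    le_rfl
  have hFi := dF_end (qs m i) (walk T i)
  have hlb := (walk_sample_lb T (i := j) (by omega) hjm
    (x := (dEnd (qs m i) (walk T i)).1) (by omega) (by omega)).1.1
  omega

lemma walk_exit_pinned {i : ℤ} (h0 : 0 ≤ i) (h1 : i < m) :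
    dEnd (qs m i) (walk T i) = qe m i := by
  have hub : ∀ k : ℤ, 0 ≤ k → (k < m → (dEnd (qs m k) (walk T k)).2 ≤ -1 - k) := by
    intro k
    refine Int.le_induction
      (motive := fun k _ => k < (m : ℤ) → (dEnd (qs m k) (walk T k)).2 ≤ -1 - k) ?_ ?_ k
    · intro hm0
      exact (walk_exit_form T le_rfl hm0).2.1
    · intro n hn ih hnm
      have ha := walk_exit_lt T hn (by omega : n < n + 1) hnm
      have hb := ih (by omega)
      omega
  have hlb : ∀ k : ℤ, k ≤ (m : ℤ) - 1 → (0 ≤ k → -k - 1 ≤ (dEnd (qs m k) (walk T k)).2) := by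
    intro k
    refine Int.le_induction_down
      (motive := fun k _ => 0 ≤ k → -k - 1 ≤ (dEnd (qs m k) (walk T k)).2) ?_ ?_ k
    · intro h0'
      have := (walk_exit_form T h0' (by omega)).1
      omega
    · intro n hn ih hn0
      have ha := walk_exit_lt T hn0 (by omega : n - 1 < n) (by omega)
      have hb := ih (by omega)
      omega
  have he2 : (dEnd (qs m i) (walk T i)).2 = -i - 1 := by
    have hA := hub i h0 h1
    have hB := hlb i (by omega) h0
    omega
  have hef := walk_exit_form T h0 h1
  rw [Prod.ext_iff]
  constructor
  · simp only [qe_fst]; omega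
  · simp only [qe_snd]; omega

lemma walk_chain {i j x : ℤ} (h0 : 0 ≤ i) (hij : i ≤ j) (hjm : j < m)
    (hx1 : j - m ≤ x) (hx2 : x ≤ (m : ℤ) - j) :
    dF (qs m j) (walk T j) x + (j - i) ≤ dF (qs m i) (walk T i) x := by
  have main : ∀ n : ℕ, ∀ i : ℤ, 0 ≤ i → i + n = j →
      dF (qs m j) (walk T j) x + (j - i) ≤ dF (qs m i) (walk T i) x := by
    intro n
    induction n with
    | zero =>
      intro i hi0 hsum
      push_cast at hsum
      have : i = j := by omega
      subst this
      omega
    | succ n ih =>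
      intro i hi0 hsum
      push_cast at hsum
      have hi1m : i + 1 < m := by omega
      have hpin1 := walk_exit_pinned T (i := i + 1) (by omega) hi1m
      have hpin0 := walk_exit_pinned T (i := i) hi0 (by omega)
      have hgap := walk_gap T (i := i) (j := i + 1) hi0 (by omega) hi1m x (by omega)
        (by rw [hpin1]; simp only [qe_fst]; omega)
        (by rw [hpin0]; simp only [qe_fst]; omega)
      have hc := ih (i + 1) (by omega) (by push_cast; omega)
      omega
  exact main (j - i).toNat i h0 (by omega)

lemma walk_nonneg {i x : ℤ} (h0 : 0 ≤ i) (h1 : i < m) (hx1 : i - m ≤ x)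
    (hx2 : x ≤ (m : ℤ) - i) :
    -i - 1 ≤ dF (qs m i) (walk T i) x := by
  have hxi : x ≤ (dEnd (qs m i) (walk T i)).1 := by
    rw [walk_exit_pinned T h0 h1]; simp only [qe_fst]; omega
  rcases lt_trichotomy x 0 with hx | hx | hx
  · by_cases hji : (m : ℤ) + x ≤ i
    · have := (walk_sample_lb T h0 h1 hx1 hxi).1.2
      omega
    · have hj1 : 0 ≤ (m : ℤ) + x := by omega
      have hj2 : (m : ℤ) + x < m := by omega
      have hiend : x ≤ (dEnd (qs m ((m : ℤ) + x)) (walk T ((m : ℤ) + x))).1 := by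
        rw [walk_exit_pinned T hj1 hj2]; simp only [qe_fst]; omega
      have hc := walk_chain T (i := i) (j := (m : ℤ) + x) (x := x) h0 (by omega) hj2
        (by omega) (by omega)
      have hlb := (walk_sample_lb T hj1 hj2 (x := x) (by omega) hiend).1.2
      omega
  · subst hx
    have hj1 : (0 : ℤ) ≤ (m : ℤ) - 1 := by omega
    have hj2 : (m : ℤ) - 1 < m := by omega
    have hiend : (0 : ℤ) ≤ (dEnd (qs m ((m : ℤ) - 1)) (walk T ((m : ℤ) - 1))).1 := by
      rw [walk_exit_pinned T hj1 hj2]; simp only [qe_fst]; omega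
    have hc := walk_chain T (i := i) (j := (m : ℤ) - 1) (x := 0) h0 (by omega) hj2
      (by omega) (by omega)
    have hlb := ((walk_sample_lb T hj1 hj2 (x := 0) (by omega) hiend).2) rfl
    omega
  · by_cases hji : (m : ℤ) - x ≤ i
    · have := (walk_sample_lb T h0 h1 hx1 hxi).1.1
      omega
    · have hj1 : 0 ≤ (m : ℤ) - x := by omega
      have hj2 : (m : ℤ) - x < m := by omega
      have hiend : x ≤ (dEnd (qs m ((m : ℤ) - x)) (walk T ((m : ℤ) - x))).1 := by
        rw [walk_exit_pinned T hj1 hj2]; simp only [qe_fst]; omega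
      have hc := walk_chain T (i := i) (j := (m : ℤ) - x) (x := x) h0 (by omega) hj2
        (by omega) (by omega)
      have hlb := (walk_sample_lb T hj1 hj2 (x := x) (by omega) hiend).1.1
      omega

end Walks3
/-! ### Conditions and transfer -/

def Cond (m : ℕ) (P : Fin m → List Step) : Prop :=
  (∀ i : Fin m, endpt (startPt m i) (P i) = finishPt m i) ∧
  (∀ i : Fin m, ∀ q ∈ pathSet (startPt m i) (P i),
    1 / 2 - (((i : ℕ) : ℝ) + 1) ≤ q.2) ∧
  (∀ i j : Fin m, i ≠ j →
    Disjoint (pathSet (startPt m i) (P i)) (pathSet (startPt m j) (P j)))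

def DCond (m : ℕ) (P : Fin m → List Step) : Prop :=
  (∀ i : Fin m, dEnd (qs m ((i : ℕ) : ℤ)) (P i) = qe m ((i : ℕ) : ℤ)) ∧
  (∀ i : Fin m, ∀ r ∈ dPorts (qs m ((i : ℕ) : ℤ)) (P i), -((i : ℕ) : ℤ) - 1 ≤ r.2) ∧
  (∀ i j : Fin m, ((i : ℕ) : ℤ) < ((j : ℕ) : ℤ) → ∀ x : ℤ,
    ((j : ℕ) : ℤ) - m ≤ x → x ≤ (m : ℤ) - ((j : ℕ) : ℤ) →
      dF (qs m ((j : ℕ) : ℤ)) (P j) x + 1 ≤ dF (qs m ((i : ℕ) : ℤ)) (P i) x)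

lemma startPt_eq (m : ℕ) (i : Fin m) : startPt m i = rp (qs m ((i : ℕ) : ℤ)) := by
  rw [startPt, rp, Prod.ext_iff]
  constructor
  · show _ = ((((i : ℕ) : ℤ) - (m : ℤ) : ℤ) : ℝ)
    push_cast; ring
  · show _ = (((-((i : ℕ) : ℤ) - 1 : ℤ)) : ℝ) + 1 / 2
    push_cast; ring

lemma finishPt_eq (m : ℕ) (i : Fin m) : finishPt m i = rp (qe m ((i : ℕ) : ℤ)) := by
  rw [finishPt, rp, Prod.ext_iff]
  constructor
  · show _ = (((m : ℤ) - ((i : ℕ) : ℤ) : ℤ) : ℝ)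
    push_cast; ring
  · show _ = (((-((i : ℕ) : ℤ) - 1 : ℤ)) : ℝ) + 1 / 2
    push_cast; ring

lemma fin_lt_int {m : ℕ} (i : Fin m) : ((i : ℕ) : ℤ) < (m : ℤ) := by
  exact_mod_cast i.isLt

lemma cond_of_dcond {m : ℕ} {P : Fin m → List Step} (h : DCond m P) : Cond m P := by
  obtain ⟨h1, h2, h3⟩ := h
  refine ⟨?_, ?_, ?_⟩
  · intro i
    rw [startPt_eq, finishPt_eq, endpt_rp, h1 i]
  · intro i q hq
    rw [startPt_eq] at hq
    refine pathSet_lb (c := 1 / 2 - (((i : ℕ) : ℝ) + 1)) ?_ q hq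
    intro r hr
    have hi := h2 i r hr
    have hc : ((-((i : ℕ) : ℤ) - 1 : ℤ) : ℝ) ≤ (r.2 : ℝ) := by exact_mod_cast hi
    push_cast at hc ⊢
    linarith
  · intro i j hij
    have key : ∀ i j : Fin m, ((i : ℕ) : ℤ) < ((j : ℕ) : ℤ) →
        Disjoint (pathSet (startPt m i) (P i)) (pathSet (startPt m j) (P j)) := by
      intro i j hlt
      rw [startPt_eq, startPt_eq]
      apply disjoint_of_gap
      · rw [h1 j]
        simp only [qs_fst, qe_fst]
        have := fin_lt_int j
        omega
      · intro x hxa hxb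
        rw [h1 j] at hxb
        simp only [qs_fst] at hxa
        simp only [qe_fst] at hxb
        exact h3 i j hlt x hxa hxb
    rcases lt_trichotomy ((i : ℕ) : ℤ) ((j : ℕ) : ℤ) with h | h | h
    · exact key i j h
    · exfalso; apply hij; apply Fin.ext; exact_mod_cast h
    · exact (key j i h).symm

lemma dcond_of_cond {m : ℕ} {P : Fin m → List Step} (h : Cond m P) : DCond m P := by
  obtain ⟨h1, h2, h3⟩ := h
  have hend : ∀ i : Fin m, dEnd (qs m ((i : ℕ) : ℤ)) (P i) = qe m ((i : ℕ) : ℤ) := by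
    intro i
    have hh := h1 i
    rw [startPt_eq, finishPt_eq, endpt_rp] at hh
    exact rp_injective hh
  have hports : ∀ i : Fin m, ∀ r ∈ dPorts (qs m ((i : ℕ) : ℤ)) (P i),
      -((i : ℕ) : ℤ) - 1 ≤ r.2 := by
    intro i r hr
    have hmem := rp_mem_pathSet hr
    rw [← startPt_eq] at hmem
    have hq := h2 i _ hmem
    have h5 : ((-((i : ℕ) : ℤ) - 1 : ℤ) : ℝ) ≤ (r.2 : ℝ) := by
      have h6 : (rp r).2 = (r.2 : ℝ) + 1 / 2 := rfl
      rw [h6] at hq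
      push_cast at hq ⊢
      linarith
    exact_mod_cast h5
  refine ⟨hend, hports, ?_⟩
  intro i j hij x hxa hxb
  set iz := ((i : ℕ) : ℤ) with hiz'
  set jz := ((j : ℕ) : ℤ) with hjz'
  have hdisj : Disjoint (pathSet (rp (qs m iz)) (P i)) (pathSet (rp (qs m jz)) (P j)) := by
    rw [← startPt_eq, ← startPt_eq]
    refine h3 i j ?_
    intro hh
    have heqz : iz = jz := by rw [hiz', hjz', hh]
    omega
  have hjm : jz < (m : ℤ) := fin_lt_int j
  have hiz : 0 ≤ iz := Int.ofNat_nonneg _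
  have main : ∀ n : ℕ, ∀ x : ℤ, x = jz - m + n → x ≤ (m : ℤ) - jz →
      dF (qs m jz) (P j) x + 1 ≤ dF (qs m iz) (P i) x := by
    intro n
    induction n with
    | zero =>
      intro x hx _
      push_cast at hx
      have hx0 : x = jz - m := by omega
      subst hx0
      have hFj : dF (qs m jz) (P j) (jz - m) = -jz - 1 := by
        have h := dF_start (qs m jz) (P j)
        simpa using h
      have hxe : jz - m ≤ (dEnd (qs m iz) (P i)).1 := by
        rw [hend i]; simp only [qe_fst]; omega
      rcases dF_cases (q := qs m iz) (L := P i) (x := jz - m)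
          (by simp only [qs_fst]; omega) hxe with hport | ⟨hm1, _, _, _⟩
      · have h9 : -iz - 1 ≤ dF (qs m iz) (P i) (jz - m) := hports i _ hport
        omega
      · have h9 : -iz - 1 ≤ dF (qs m iz) (P i) (jz - m) := hports i _ hm1
        omega
    | succ n ih =>
      intro x hx hxub
      push_cast at hx
      have hprev := ih (x - 1) (by push_cast; omega) (by omega)
      have hxei : x ≤ (dEnd (qs m iz) (P i)).1 := by
        rw [hend i]; simp only [qe_fst]; omega
      have hxej : x ≤ (dEnd (qs m jz) (P j)).1 := by
        rw [hend j]; simp only [qe_fst]; omega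
      have hadji := dF_adj (q := qs m iz) (L := P i) (x := x - 1)
        (by simp only [qs_fst]; omega) (by omega)
      have hadjj := dF_adj (q := qs m jz) (L := P j) (x := x - 1)
        (by simp only [qs_fst]; omega) (by omega)
      rw [show x - 1 + 1 = x by ring] at hadji hadjj
      by_contra hcon
      push_neg at hcon
      rcases eq_or_lt_of_le (by omega : dF (qs m iz) (P i) x ≤ dF (qs m jz) (P j) x)
        with heq | hlt2
      · have hmi := sample_mem_pathSet (q := qs m iz) (L := P i) (x := x)
          (by simp only [qs_fst]; omega) hxei
        have hmj := sample_mem_pathSet (q := qs m jz) (L := P j) (x := x)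
          (by simp only [qs_fst]; omega) hxej
        rw [← heq] at hmj
        exact Set.disjoint_left.mp hdisj hmi hmj
      · -- crossing configuration
        have hAi : dF (qs m iz) (P i) x = dF (qs m iz) (P i) (x - 1) - 1 := by omega
        have hBj : dF (qs m jz) (P j) (x - 1) = dF (qs m iz) (P i) (x - 1) - 1 := by omega
        have hBj' : dF (qs m jz) (P j) x = dF (qs m iz) (P i) (x - 1) := by omega
        have hcast : ((x - 1 : ℤ) : ℝ) = (x : ℝ) - 1 := by push_cast; ring
        have hplus1 : ((x - 1 : ℤ) : ℝ) + 1 = ((x : ℤ) : ℝ) := by push_cast; ring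
        have haffi := pathFun_affine (q := qs m iz) (L := P i) (k := x - 1)
          (x := (x : ℝ) - 1 / 2) (by rw [hcast]; linarith) (by rw [hcast]; linarith)
        have haffj := pathFun_affine (q := qs m jz) (L := P j) (k := x - 1)
          (x := (x : ℝ) - 1 / 2) (by rw [hcast]; linarith) (by rw [hcast]; linarith)
        rw [pathFun_rp (q := qs m iz) (L := P i) (x - 1), hplus1,
          pathFun_rp (q := qs m iz) (L := P i) x, hAi] at haffi
        rw [pathFun_rp (q := qs m jz) (L := P j) (x - 1), hplus1,
          pathFun_rp (q := qs m jz) (L := P j) x, hBj, hBj'] at haffj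
        have hvi : pathFun (rp (qs m iz)) (P i) ((x : ℝ) - 1 / 2)
            = ((dF (qs m iz) (P i) (x - 1) : ℤ) : ℝ) := by
          rw [haffi]; push_cast; ring
        have hvj : pathFun (rp (qs m jz)) (P j) ((x : ℝ) - 1 / 2)
            = ((dF (qs m iz) (P i) (x - 1) : ℤ) : ℝ) := by
          rw [haffj]; push_cast; ring
        have hloi : ((qs m iz).1 : ℝ) ≤ (x : ℝ) - 1 / 2 := by
          have h9 : ((qs m iz).1 : ℤ) = iz - m := rfl
          rw [h9]
          have h10 : iz - (m : ℤ) ≤ x - 1 := by omega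
          have h11 : ((iz - (m : ℤ) : ℤ) : ℝ) ≤ ((x - 1 : ℤ) : ℝ) := by exact_mod_cast h10
          rw [hcast] at h11
          linarith
        have hhii : (x : ℝ) - 1 / 2 ≤ (endpt (rp (qs m iz)) (P i)).1 := by
          rw [endpt_rp, hend i]
          show _ ≤ (((qe m iz).1 : ℤ) : ℝ)
          have h9 : ((qe m iz).1 : ℤ) = (m : ℤ) - iz := rfl
          rw [h9]
          have h10 : x ≤ (m : ℤ) - iz := by omega
          have h11 : ((x : ℤ) : ℝ) ≤ (((m : ℤ) - iz : ℤ) : ℝ) := by exact_mod_cast h10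
          push_cast at h11 ⊢
          linarith
        have hloj : ((qs m jz).1 : ℝ) ≤ (x : ℝ) - 1 / 2 := by
          have h9 : ((qs m jz).1 : ℤ) = jz - m := rfl
          rw [h9]
          have h10 : jz - (m : ℤ) ≤ x - 1 := by omega
          have h11 : ((jz - (m : ℤ) : ℤ) : ℝ) ≤ ((x - 1 : ℤ) : ℝ) := by exact_mod_cast h10
          rw [hcast] at h11
          linarith
        have hhij : (x : ℝ) - 1 / 2 ≤ (endpt (rp (qs m jz)) (P j)).1 := by
          rw [endpt_rp, hend j]
          show _ ≤ (((qe m jz).1 : ℤ) : ℝ)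
          have h9 : ((qe m jz).1 : ℤ) = (m : ℤ) - jz := rfl
          rw [h9]
          have h10 : x ≤ (m : ℤ) - jz := by omega
          have h11 : ((x : ℤ) : ℝ) ≤ (((m : ℤ) - jz : ℤ) : ℝ) := by exact_mod_cast h10
          push_cast at h11 ⊢
          linarith
        have hgi := graph_mem_pathSet (p := rp (qs m iz)) (L := P i) hloi hhii
        have hgj := graph_mem_pathSet (p := rp (qs m jz)) (L := P j) hloj hhij
        rw [hvi] at hgi
        rw [hvj] at hgj
        exact Set.disjoint_left.mp hdisj hgi hgj
  exact main (x - (jz - m)).toNat x (by omega) hxb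

/-! ### MapA : tilings satisfy DCond -/

lemma walk_dcond {m : ℕ} (T : Tiling m) : DCond m (fun i => walk T ((i : ℕ) : ℤ)) := by
  refine ⟨?_, ?_, ?_⟩
  · intro i
    exact walk_exit_pinned T (Int.ofNat_nonneg _) (fin_lt_int i)
  · intro i r hr
    have h0 : (0 : ℤ) ≤ ((i : ℕ) : ℤ) := Int.ofNat_nonneg _
    have h1 := fin_lt_int i
    have hx1 := mem_dPorts_x_ge hr
    have hx2 := mem_dPorts_x_le hr
    rw [walk_exit_pinned T h0 h1] at hx2
    simp only [qs_fst] at hx1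
    simp only [qe_fst] at hx2
    have := walk_nonneg T h0 h1 (x := r.1) (by omega) (by omega)
    rw [dF_port hr] at this
    exact this
  · intro i j hij x hxa hxb
    have h0 : (0 : ℤ) ≤ ((i : ℕ) : ℤ) := Int.ofNat_nonneg _
    have hjm := fin_lt_int j
    apply walk_gap T h0 hij hjm x hxa
    · rw [walk_exit_pinned T (by omega) hjm]
      simp only [qe_fst]; omega
    · rw [walk_exit_pinned T h0 (by omega)]
      simp only [qe_fst]; omega
/-! ### Reconstruction : definitions and cell lemmas -/

lemma port_parity {m : ℕ} {iz : ℤ} {L : List Step} {r : ℤ × ℤ}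
    (hr : r ∈ dPorts (qs m iz) L) : (r.1 + r.2 + m) % 2 = 1 := by
  have h := dPorts_parity hr
  have h2 : ((qs m iz).1 + (qs m iz).2) = -(m : ℤ) - 1 := by simp; ring
  rw [h2] at h
  omega

lemma step_cell_val {q : ℤ × ℤ} {L : List Step} {r : ℤ × ℤ} {s : Step} {c : Cell}
    (hrs : (r, s) ∈ stepsAt q L) (hc : c ∈ (stepDomino (r, s)).cells) :
    (c.2 = dF q L c.1 ∨ c.2 = dF q L (c.1 + 1)) ∧ q.1 ≤ c.1 ∧ c.1 + 1 ≤ (dEnd q L).1 := by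
  have hp1 := stepsAt_dF₁ hrs
  have hp2 := stepsAt_dF₂ hrs
  have hr1 : q.1 ≤ r.1 := mem_dPorts_x_ge (stepsAt_port_mem hrs)
  have hr2 : r.1 + (dvec s).1 ≤ (dEnd q L).1 := by
    have h := mem_dPorts_x_le (stepsAt_next_mem hrs)
    simpa using h
  cases s with
  | flat =>
    have hmid := stepsAt_dF_mid hrs
    have hv : (dvec Step.flat).1 = 2 := rfl
    rw [show stepDomino (r, Step.flat) = Domino.horiz r.1 r.2 from rfl, cells_horiz] at hc
    rcases hc with rfl | rfl
    · refine ⟨Or.inl ?_, ?_, ?_⟩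
      · show r.2 = dF q L r.1
        omega
      · show q.1 ≤ r.1
        omega
      · show r.1 + 1 ≤ _
        omega
    · refine ⟨Or.inl ?_, ?_, ?_⟩
      · show r.2 = dF q L (r.1 + 1)
        omega
      · show q.1 ≤ r.1 + 1
        omega
      · show r.1 + 1 + 1 ≤ _
        omega
  | up =>
    have hv : (dvec Step.up).1 = 1 := rfl
    have hv2 : (dvec Step.up).2 = 1 := rfl
    rw [hv, hv2] at hp2
    rw [show stepDomino (r, Step.up) = Domino.vert r.1 r.2 from rfl, cells_vert] at hc
    rcases hc with rfl | rfl
    · refine ⟨Or.inl ?_, ?_, ?_⟩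
      · show r.2 = dF q L r.1
        omega
      · show q.1 ≤ r.1
        omega
      · show r.1 + 1 ≤ _
        omega
    · refine ⟨Or.inr ?_, ?_, ?_⟩
      · show r.2 + 1 = dF q L (r.1 + 1)
        omega
      · show q.1 ≤ r.1
        omega
      · show r.1 + 1 ≤ _
        omega
  | down =>
    have hv : (dvec Step.down).1 = 1 := rfl
    have hv2 : (dvec Step.down).2 = -1 := rfl
    rw [hv, hv2] at hp2
    rw [show stepDomino (r, Step.down) = Domino.vert r.1 (r.2 - 1) from rfl, cells_vert] at hc
    rcases hc with rfl | rfl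
    · refine ⟨Or.inr ?_, ?_, ?_⟩
      · show r.2 - 1 = dF q L (r.1 + 1)
        omega
      · show q.1 ≤ r.1
        omega
      · show r.1 + 1 ≤ _
        omega
    · refine ⟨Or.inl ?_, ?_, ?_⟩
      · show r.2 - 1 + 1 = dF q L r.1
        omega
      · show q.1 ≤ r.1
        omega
      · show r.1 + 1 ≤ _
        omega

lemma step_cell_col {r : ℤ × ℤ} {s : Step} {c : Cell}
    (hc : c ∈ (stepDomino (r, s)).cells) :
    r.1 ≤ c.1 ∧ c.1 < r.1 + (dvec s).1 := by
  cases s with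
  | flat =>
    have hv : (dvec Step.flat).1 = 2 := rfl
    rw [show stepDomino (r, Step.flat) = Domino.horiz r.1 r.2 from rfl, cells_horiz] at hc
    rcases hc with rfl | rfl
    · exact ⟨by omega, by show r.1 < r.1 + _; omega⟩
    · exact ⟨by show r.1 ≤ r.1 + 1; omega, by show r.1 + 1 < r.1 + _; omega⟩
  | up =>
    have hv : (dvec Step.up).1 = 1 := rfl
    rw [show stepDomino (r, Step.up) = Domino.vert r.1 r.2 from rfl, cells_vert] at hc
    rcases hc with rfl | rfl
    · exact ⟨by omega, by show r.1 < r.1 + _; omega⟩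
    · exact ⟨by omega, by show r.1 < r.1 + _; omega⟩
  | down =>
    have hv : (dvec Step.down).1 = 1 := rfl
    rw [show stepDomino (r, Step.down) = Domino.vert r.1 (r.2 - 1) from rfl, cells_vert] at hc
    rcases hc with rfl | rfl
    · exact ⟨by omega, by show r.1 < r.1 + _; omega⟩
    · exact ⟨by omega, by show r.1 < r.1 + _; omega⟩

lemma sample_ports_of_ne {q : ℤ × ℤ} {L : List Step} {x : ℤ} (hx1 : q.1 ≤ x)
    (hx2 : x + 1 ≤ (dEnd q L).1) (hne : dF q L (x + 1) ≠ dF q L x) :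
    (x, dF q L x) ∈ dPorts q L ∧ (x + 1, dF q L (x + 1)) ∈ dPorts q L := by
  constructor
  · rcases dF_cases (q := q) (L := L) (x := x) hx1 (by omega) with h | ⟨_, _, _, hup⟩
    · exact h
    · exact absurd hup hne
  · rcases dF_cases (q := q) (L := L) (x := x + 1) (by omega) hx2 with h | ⟨_, _, hdn, _⟩
    · exact h
    · rw [show x + 1 - 1 = x by ring] at hdn
      exact absurd hdn.symm hne

lemma cell_inAD_arith {m : ℕ} {iz a v x0 : ℤ} (hi0 : 0 ≤ iz) (him : iz < m)
    (ha1 : iz - m ≤ a) (ha2 : a + 1 ≤ m - iz) (hx0 : x0 = a ∨ x0 = a + 1)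
    (hv1 : -iz - 1 ≤ v) (hv2 : v ≤ -iz - 1 + (x0 - (iz - m)))
    (hv3 : v ≤ -iz - 1 + ((m - iz) - x0)) : inAD m (a, v) := by
  rw [inAD_iff]; split_ifs <;> omega

section Recon
variable {m : ℕ} {P : Fin m → List Step}

lemma path_dF_lb (hD : DCond m P) (i : Fin m) {x : ℤ}
    (hx1 : ((i : ℕ) : ℤ) - m ≤ x) (hx2 : x ≤ (dEnd (qs m ((i : ℕ) : ℤ)) (P i)).1) :
    -((i : ℕ) : ℤ) - 1 ≤ dF (qs m ((i : ℕ) : ℤ)) (P i) x := by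
  rcases dF_cases (q := qs m ((i : ℕ) : ℤ)) (L := P i) (x := x)
      (by simp only [qs_fst]; omega) hx2 with hport | ⟨hm1, _, _, _⟩
  · exact hD.2.1 i _ hport
  · exact hD.2.1 i _ hm1

lemma step_cell_inAD (hD : DCond m P) (i : Fin m) {r : ℤ × ℤ} {s : Step} {c : Cell}
    (hrs : (r, s) ∈ stepsAt (qs m ((i : ℕ) : ℤ)) (P i))
    (hc : c ∈ (stepDomino (r, s)).cells) : inAD m c := by
  set iz := ((i : ℕ) : ℤ) with hiz'
  obtain ⟨hval, hc1, hc2⟩ := step_cell_val hrs hc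
  simp only [qs_fst] at hc1
  rw [hD.1 i] at hc2
  simp only [qe_fst] at hc2
  have hi0 : 0 ≤ iz := Int.ofNat_nonneg _
  have him : iz < m := fin_lt_int i
  obtain ⟨x0, hx0, hcv⟩ : ∃ x0, (x0 = c.1 ∨ x0 = c.1 + 1) ∧ c.2 = dF (qs m iz) (P i) x0 := by
    rcases hval with h | h
    · exact ⟨c.1, Or.inl rfl, h⟩
    · exact ⟨c.1 + 1, Or.inr rfl, h⟩
  have hx0r : iz - m ≤ x0 ∧ x0 ≤ (m : ℤ) - iz := by
    rcases hx0 with rfl | rfl <;> omega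
  have hxe : x0 ≤ (dEnd (qs m iz) (P i)).1 := by
    rw [hD.1 i]; simp only [qe_fst]; omega
  have hlb := path_dF_lb hD i (x := x0) (by omega) hxe
  have hub := dF_bounds (q := qs m iz) (L := P i) (x := x0)
    (by simp only [qs_fst]; omega) hxe
  rw [hD.1 i] at hub
  simp only [qs_fst, qs_snd, qe_fst, qe_snd] at hub
  rw [← hiz'] at hlb
  have hcell : inAD m (c.1, c.2) := by
    apply cell_inAD_arith hi0 him hc1 hc2 (x0 := x0) (by omega) (by omega) (by omega)
      (by omega)
  exact hcell

end Recon
/-! ### Reconstruction : dominoes and disjointness -/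

def Covered (m : ℕ) (P : Fin m → List Step) (c : Cell) : Prop :=
  ∃ i : Fin m, ∃ rs ∈ stepsAt (qs m ((i : ℕ) : ℤ)) (P i), c ∈ (stepDomino rs).cells

noncomputable def stepDominoes (m : ℕ) (P : Fin m → List Step) : Finset Domino :=
  Finset.univ.biUnion
    (fun i : Fin m => ((stepsAt (qs m ((i : ℕ) : ℤ)) (P i)).map stepDomino).toFinset)

lemma mem_stepDominoes {m : ℕ} {P : Fin m → List Step} {d : Domino} :
    d ∈ stepDominoes m P ↔
      ∃ i : Fin m, ∃ rs ∈ stepsAt (qs m ((i : ℕ) : ℤ)) (P i), stepDomino rs = d := by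
  simp [stepDominoes, List.mem_map]

noncomputable def cellsAD (m : ℕ) : Finset Cell :=
  (Finset.Icc (-(m : ℤ) - 1) ((m : ℤ) + 1) ×ˢ Finset.Icc (-(m : ℤ) - 1) ((m : ℤ) + 1)).filter
    (fun c => inAD m c)

lemma mem_cellsAD {m : ℕ} {c : Cell} : c ∈ cellsAD m ↔ inAD m c := by
  rw [cellsAD, Finset.mem_filter, Finset.mem_product, Finset.mem_Icc, Finset.mem_Icc]
  constructor
  · exact fun h => h.2
  · intro h
    refine ⟨?_, h⟩
    have h2 := inAD_iff.mp (show inAD m (c.1, c.2) from h)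
    split_ifs at h2 <;> constructor <;> constructor <;> omega

open scoped Classical in
noncomputable def fillers (m : ℕ) (P : Fin m → List Step) : Finset Domino :=
  ((cellsAD m).filter
    (fun c => (c.1 + c.2 + (m : ℤ)) % 2 = 0 ∧ ¬ Covered m P c)).image
    (fun c => Domino.horiz c.1 c.2)

lemma mem_fillers {m : ℕ} {P : Fin m → List Step} {d : Domino} :
    d ∈ fillers m P ↔ ∃ c : Cell, inAD m c ∧ (c.1 + c.2 + (m : ℤ)) % 2 = 0 ∧
      ¬ Covered m P c ∧ Domino.horiz c.1 c.2 = d := by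
  classical
  simp [fillers, mem_cellsAD, and_assoc]

noncomputable def reconDominoes (m : ℕ) (P : Fin m → List Step) : Finset Domino :=
  stepDominoes m P ∪ fillers m P

lemma stepsAt_sep {q : ℤ × ℤ} {L : List Step} :
    ∀ {r r' : ℤ × ℤ} {s s' : Step}, (r, s) ∈ stepsAt q L → (r', s') ∈ stepsAt q L →
      ((r, s) = (r', s') ∨ r.1 + (dvec s).1 ≤ r'.1 ∨ r'.1 + (dvec s').1 ≤ r.1) := by
  induction L generalizing q with
  | nil => intro r r' s s' h; simp at h
  | cons s0 L ih =>
    intro r r' s s' h h'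
    rcases List.mem_cons.mp h with he | h2 <;> rcases List.mem_cons.mp h' with he' | h2'
    · left
      rw [Prod.mk.injEq] at he he'
      obtain ⟨rfl, rfl⟩ := he
      obtain ⟨h1, h2⟩ := he'
      rw [Prod.mk.injEq]
      exact ⟨h1.symm, h2.symm⟩
    · right; left
      have h1e : r = q := congrArg Prod.fst he
      have h2e : s = s0 := congrArg Prod.snd he
      rw [h1e, h2e]
      have h9 : (q + dvec s0).1 ≤ r'.1 := mem_dPorts_x_ge (stepsAt_port_mem h2')
      simpa using h9
    · right; right
      have h1e : r' = q := congrArg Prod.fst he'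
      have h2e : s' = s0 := congrArg Prod.snd he'
      rw [h1e, h2e]
      have h9 : (q + dvec s0).1 ≤ r.1 := mem_dPorts_x_ge (stepsAt_port_mem h2)
      simpa using h9
    · exact ih h2 h2'

lemma step_cells_disj_same {q : ℤ × ℤ} {L : List Step} {rs rs' : (ℤ × ℤ) × Step}
    (h : rs ∈ stepsAt q L) (h' : rs' ∈ stepsAt q L) {c : Cell}
    (hc : c ∈ (stepDomino rs).cells) (hc' : c ∈ (stepDomino rs').cells) : rs = rs' := by
  obtain ⟨r, s⟩ := rs
  obtain ⟨r', s'⟩ := rs'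
  rcases stepsAt_sep h h' with he | hsep | hsep
  · exact he
  · exfalso
    have k1 := step_cell_col hc
    have k2 := step_cell_col hc'
    omega
  · exfalso
    have k1 := step_cell_col hc
    have k2 := step_cell_col hc'
    omega

lemma step_cells_disj_cross {m : ℕ} {P : Fin m → List Step} (hD : DCond m P) {i j : Fin m}
    (hij : ((i : ℕ) : ℤ) < ((j : ℕ) : ℤ)) {rs rs' : (ℤ × ℤ) × Step}
    (hi : rs ∈ stepsAt (qs m ((i : ℕ) : ℤ)) (P i))
    (hj : rs' ∈ stepsAt (qs m ((j : ℕ) : ℤ)) (P j))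
    {c : Cell} (hci : c ∈ (stepDomino rs).cells) (hcj : c ∈ (stepDomino rs').cells) :
    False := by
  have hi0 : (0 : ℤ) ≤ ((i : ℕ) : ℤ) := Int.ofNat_nonneg _
  have hjm : ((j : ℕ) : ℤ) < (m : ℤ) := fin_lt_int j
  obtain ⟨hvi, hci1, hci2⟩ := step_cell_val hi hci
  obtain ⟨hvj, hcj1, hcj2⟩ := step_cell_val hj hcj
  simp only [qs_fst] at hci1 hcj1
  rw [hD.1 i] at hci2
  rw [hD.1 j] at hcj2
  simp only [qe_fst] at hci2 hcj2
  have hg1 := hD.2.2 i j hij c.1 (by omega) (by omega)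
  have hg2 := hD.2.2 i j hij (c.1 + 1) (by omega) (by omega)
  have hadji := dF_adj (q := qs m ((i : ℕ) : ℤ)) (L := P i) (x := c.1)
    (by simp only [qs_fst]; omega) (by rw [hD.1 i]; simp only [qe_fst]; omega)
  have hadjj := dF_adj (q := qs m ((j : ℕ) : ℤ)) (L := P j) (x := c.1)
    (by simp only [qs_fst]; omega) (by rw [hD.1 j]; simp only [qe_fst]; omega)
  rcases hvi with hvi | hvi <;> rcases hvj with hvj | hvj
  · omega
  · -- c.2 = dFi c.1 = dFj (c.1 + 1) : both rising
    have hΔi : dF (qs m ((i : ℕ) : ℤ)) (P i) (c.1 + 1) ≠ dF (qs m ((i : ℕ) : ℤ)) (P i) c.1 := by omega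
    have hΔj : dF (qs m ((j : ℕ) : ℤ)) (P j) (c.1 + 1) ≠ dF (qs m ((j : ℕ) : ℤ)) (P j) c.1 := by omega
    have hpi := (sample_ports_of_ne (q := qs m ((i : ℕ) : ℤ)) (L := P i) (x := c.1)
      (by simp only [qs_fst]; omega)
      (by rw [hD.1 i]; simp only [qe_fst]; omega) hΔi).1
    have hpj := (sample_ports_of_ne (q := qs m ((j : ℕ) : ℤ)) (L := P j) (x := c.1)
      (by simp only [qs_fst]; omega)
      (by rw [hD.1 j]; simp only [qe_fst]; omega) hΔj).2
    have p1 : (c.1 + dF (qs m ((i : ℕ) : ℤ)) (P i) c.1 + (m : ℤ)) % 2 = 1 := port_parity hpi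
    have p2 : (c.1 + 1 + dF (qs m ((j : ℕ) : ℤ)) (P j) (c.1 + 1) + (m : ℤ)) % 2 = 1 := port_parity hpj
    omega
  · -- c.2 = dFi (c.1 + 1) = dFj c.1 : both falling
    have hΔi : dF (qs m ((i : ℕ) : ℤ)) (P i) (c.1 + 1) ≠ dF (qs m ((i : ℕ) : ℤ)) (P i) c.1 := by omega
    have hΔj : dF (qs m ((j : ℕ) : ℤ)) (P j) (c.1 + 1) ≠ dF (qs m ((j : ℕ) : ℤ)) (P j) c.1 := by omega
    have hpi := (sample_ports_of_ne (q := qs m ((i : ℕ) : ℤ)) (L := P i) (x := c.1)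
      (by simp only [qs_fst]; omega)
      (by rw [hD.1 i]; simp only [qe_fst]; omega) hΔi).2
    have hpj := (sample_ports_of_ne (q := qs m ((j : ℕ) : ℤ)) (L := P j) (x := c.1)
      (by simp only [qs_fst]; omega)
      (by rw [hD.1 j]; simp only [qe_fst]; omega) hΔj).1
    have p1 : (c.1 + 1 + dF (qs m ((i : ℕ) : ℤ)) (P i) (c.1 + 1) + (m : ℤ)) % 2 = 1 := port_parity hpi
    have p2 : (c.1 + dF (qs m ((j : ℕ) : ℤ)) (P j) c.1 + (m : ℤ)) % 2 = 1 := port_parity hpj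
    omega
  · omega
/-! ### Reconstruction : coverage and the tiling -/

section Recon3
variable {m : ℕ} {P : Fin m → List Step}

lemma qe_cell_out {m : ℕ} {iz : ℤ} (h0 : 0 ≤ iz) : ¬ inAD m ((m : ℤ) - iz, -iz - 1) := by
  rw [inAD_iff]; split_ifs <;> omega

lemma port_covered (hD : DCond m P) (i : Fin m) {r : ℤ × ℤ}
    (hr : r ∈ dPorts (qs m ((i : ℕ) : ℤ)) (P i)) (hAD : inAD m r) : Covered m P r := by
  rcases mem_dPorts_outgoing hr with he | ⟨s, hs⟩
  · exfalso
    rw [he, hD.1 i] at hAD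
    exact qe_cell_out (Int.ofNat_nonneg _) hAD
  · refine ⟨i, (r, s), hs, ?_⟩
    cases s with
    | flat =>
      rw [show stepDomino (r, Step.flat) = Domino.horiz r.1 r.2 from rfl, cells_horiz]
      left; rfl
    | up =>
      rw [show stepDomino (r, Step.up) = Domino.vert r.1 r.2 from rfl, cells_vert]
      left; rfl
    | down =>
      rw [show stepDomino (r, Step.down) = Domino.vert r.1 (r.2 - 1) from rfl, cells_vert]
      right
      rw [Prod.ext_iff]
      exact ⟨rfl, by show r.2 = r.2 - 1 + 1; omega⟩

lemma white_covered_port (hD : DCond m P) {c : Cell}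
    (hw : (c.1 + c.2 + (m : ℤ)) % 2 = 1) (hcov : Covered m P c) :
    ∃ i : Fin m, c ∈ dPorts (qs m ((i : ℕ) : ℤ)) (P i) := by
  obtain ⟨i, ⟨r, s⟩, hrs, hc⟩ := hcov
  have hport := stepsAt_port_mem hrs
  have hpar : (r.1 + r.2 + (m : ℤ)) % 2 = 1 := port_parity hport
  refine ⟨i, ?_⟩
  cases s with
  | flat =>
    rw [show stepDomino (r, Step.flat) = Domino.horiz r.1 r.2 from rfl, cells_horiz] at hc
    rcases hc with rfl | rfl
    · exact hport
    · exfalso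
      have hw' : (r.1 + 1 + r.2 + (m : ℤ)) % 2 = 1 := hw
      omega
  | up =>
    rw [show stepDomino (r, Step.up) = Domino.vert r.1 r.2 from rfl, cells_vert] at hc
    rcases hc with rfl | rfl
    · exact hport
    · exfalso
      have hw' : (r.1 + (r.2 + 1) + (m : ℤ)) % 2 = 1 := hw
      omega
  | down =>
    rw [show stepDomino (r, Step.down) = Domino.vert r.1 (r.2 - 1) from rfl, cells_vert] at hc
    rcases hc with rfl | rfl
    · exfalso
      have hw' : (r.1 + (r.2 - 1) + (m : ℤ)) % 2 = 1 := hw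
      omega
    · have heq : ((r.1 : ℤ), r.2 - 1 + 1) = r := by
        rw [Prod.ext_iff]
        exact ⟨rfl, by omega⟩
      rw [heq]
      exact hport

lemma gray_covered_next (hD : DCond m P) {c : Cell}
    (hg : (c.1 + c.2 + (m : ℤ)) % 2 = 0) (hcov : Covered m P c) :
    ∃ i : Fin m, (c.1 + 1, c.2) ∈ dPorts (qs m ((i : ℕ) : ℤ)) (P i) := by
  obtain ⟨i, ⟨r, s⟩, hrs, hc⟩ := hcov
  have hport := stepsAt_port_mem hrs
  have hnext := stepsAt_next_mem hrs
  have hpar : (r.1 + r.2 + (m : ℤ)) % 2 = 1 := port_parity hport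
  refine ⟨i, ?_⟩
  cases s with
  | flat =>
    rw [show stepDomino (r, Step.flat) = Domino.horiz r.1 r.2 from rfl, cells_horiz] at hc
    rcases hc with rfl | rfl
    · exfalso
      have hg' : (r.1 + r.2 + (m : ℤ)) % 2 = 0 := hg
      omega
    · have he : (((r.1 + 1 : ℤ), r.2).1 + 1, ((r.1 + 1 : ℤ), r.2).2) = r + dvec Step.flat := by
        have e1 : (r + dvec Step.flat).1 = r.1 + 2 := rfl
        have e2 : (r + dvec Step.flat).2 = r.2 + 0 := rfl
        rw [Prod.ext_iff]
        exact ⟨by show r.1 + 1 + 1 = _; omega, by show r.2 = _; omega⟩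
      rw [he]
      exact hnext
  | up =>
    rw [show stepDomino (r, Step.up) = Domino.vert r.1 r.2 from rfl, cells_vert] at hc
    rcases hc with rfl | rfl
    · exfalso
      have hg' : (r.1 + r.2 + (m : ℤ)) % 2 = 0 := hg
      omega
    · have he : (((r.1 : ℤ), r.2 + 1).1 + 1, ((r.1 : ℤ), r.2 + 1).2) = r + dvec Step.up := by
        have e1 : (r + dvec Step.up).1 = r.1 + 1 := rfl
        have e2 : (r + dvec Step.up).2 = r.2 + 1 := rfl
        rw [Prod.ext_iff]
        exact ⟨by show r.1 + 1 = _; omega, by show r.2 + 1 = _; omega⟩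
      rw [he]
      exact hnext
  | down =>
    rw [show stepDomino (r, Step.down) = Domino.vert r.1 (r.2 - 1) from rfl, cells_vert] at hc
    rcases hc with rfl | rfl
    · have he : (((r.1 : ℤ), r.2 - 1).1 + 1, ((r.1 : ℤ), r.2 - 1).2) = r + dvec Step.down := by
        have e1 : (r + dvec Step.down).1 = r.1 + 1 := rfl
        have e2 : (r + dvec Step.down).2 = r.2 + -1 := rfl
        rw [Prod.ext_iff]
        exact ⟨by show r.1 + 1 = _; omega, by show r.2 - 1 = _; omega⟩
      rw [he]
      exact hnext
    · exfalso
      have hg' : (r.1 + (r.2 - 1 + 1) + (m : ℤ)) % 2 = 0 := hg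
      omega

lemma filler_partner_uncovered (hD : DCond m P) {a b : ℤ} (hAD : inAD m (a, b))
    (hg : (a + b + (m : ℤ)) % 2 = 0) (hunc : ¬ Covered m P (a, b)) :
    ¬ Covered m P (a + 1, b) := by
  intro hcov
  obtain ⟨i, hp⟩ := white_covered_port hD (c := (a + 1, b))
    (by show (a + 1 + b + (m : ℤ)) % 2 = 1; omega) hcov
  rcases mem_dPorts_incoming hp with hq | ⟨r', s', hst, harr⟩
  · have h1 : a + 1 = ((i : ℕ) : ℤ) - m := congrArg Prod.fst hq
    have h2 : b = -((i : ℕ) : ℤ) - 1 := congrArg Prod.snd hq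
    have heq : ((a : ℤ), b) = (((i : ℕ) : ℤ) - (m : ℤ) - 1, -((i : ℕ) : ℤ) - 1) := by
      rw [Prod.ext_iff]
      exact ⟨by omega, by omega⟩
    rw [heq] at hAD
    exact qs_left_out (Int.ofNat_nonneg _) hAD
  · have hcell := arrival_cell_mem r' s'
    rw [harr] at hcell
    have heq : (((a + 1 : ℤ), b).1 - 1, ((a + 1 : ℤ), b).2) = ((a : ℤ), b) := by
      rw [Prod.ext_iff]
      exact ⟨by show a + 1 - 1 = a; omega, rfl⟩
    rw [heq] at hcell
    exact hunc ⟨i, (r', s'), hst, hcell⟩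

lemma filler_right_inAD (hD : DCond m P) {a b : ℤ} (hAD : inAD m (a, b))
    (hg : (a + b + (m : ℤ)) % 2 = 0) (hunc : ¬ Covered m P (a, b)) :
    inAD m (a + 1, b) := by
  by_contra hout
  have h1 : inAD m (a + 1 - 1, b) := by
    have heq : ((a + 1 - 1 : ℤ), b) = ((a : ℤ), b) := by
      rw [Prod.ext_iff]; exact ⟨by omega, rfl⟩
    rw [heq]
    exact hAD
  have hrb := right_boundary (m := m) (x := a + 1) (b := b) h1 hout (by omega)
  obtain ⟨hb1, hx⟩ := hrb
  have hbm : -(m : ℤ) ≤ b := by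
    have h2 := inAD_iff.mp hAD
    split_ifs at h2 <;> omega
  have hmb : 0 ≤ -b - 1 := by omega
  have hiltm : (-b - 1).toNat < m := by omega
  set i : Fin m := ⟨(-b - 1).toNat, hiltm⟩ with hi
  have hizv : ((i : ℕ) : ℤ) = -b - 1 := Int.toNat_of_nonneg hmb
  have hlast := dEnd_mem_dPorts (qs m ((i : ℕ) : ℤ)) (P i)
  rcases mem_dPorts_incoming hlast with he | ⟨r', s', hst, harr⟩
  · have h3 := congrArg Prod.fst (hD.1 i)
    rw [he] at h3
    simp only [qs_fst, qe_fst] at h3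
    omega
  · have hcell := arrival_cell_mem r' s'
    rw [harr, hD.1 i] at hcell
    have heq : ((qe m ((i : ℕ) : ℤ)).1 - 1, (qe m ((i : ℕ) : ℤ)).2) = ((a : ℤ), b) := by
      rw [Prod.ext_iff]
      simp only [qe_fst, qe_snd]
      exact ⟨by omega, by omega⟩
    rw [heq] at hcell
    exact hunc ⟨i, (r', s'), hst, hcell⟩

lemma recon_covers_exists (hD : DCond m P) {c : Cell} (hAD : inAD m c) :
    ∃ d ∈ reconDominoes m P, c ∈ d.cells := by
  by_cases hcov : Covered m P c
  · obtain ⟨i, rs, hrs, hc⟩ := hcov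
    exact ⟨stepDomino rs, Finset.mem_union_left _ (mem_stepDominoes.mpr ⟨i, rs, hrs, rfl⟩), hc⟩
  · rcases Int.emod_two_eq (c.1 + c.2 + m) with hg | hw
    · refine ⟨Domino.horiz c.1 c.2, Finset.mem_union_right _ ?_, ?_⟩
      · exact mem_fillers.mpr ⟨c, hAD, hg, hcov, rfl⟩
      · rw [cells_horiz]; left; rfl
    · by_cases hgAD : inAD m (c.1 - 1, c.2)
      · have hgpar : ((c.1 - 1 : ℤ) + c.2 + (m : ℤ)) % 2 = 0 := by omega
        have hpu : ¬ Covered m P (c.1 - 1, c.2) := by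
          intro hcg
          obtain ⟨i, hp⟩ := gray_covered_next hD (c := (c.1 - 1, c.2)) hgpar hcg
          have heq : (((c.1 - 1 : ℤ), c.2).1 + 1, ((c.1 - 1 : ℤ), c.2).2) = c := by
            rw [Prod.ext_iff]
            exact ⟨by show c.1 - 1 + 1 = c.1; omega, rfl⟩
          rw [heq] at hp
          exact hcov (port_covered hD i hp hAD)
        refine ⟨Domino.horiz (c.1 - 1) c.2, Finset.mem_union_right _ ?_, ?_⟩
        · exact mem_fillers.mpr ⟨(c.1 - 1, c.2), hgAD, hgpar, hpu, rfl⟩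
        · rw [cells_horiz]; right
          rw [Prod.ext_iff]
          exact ⟨by show c.1 = c.1 - 1 + 1; omega, rfl⟩
      · exfalso
        obtain ⟨hb1, hx⟩ := left_boundary (m := m) (x := c.1) (b := c.2)
          (show inAD m (c.1, c.2) from hAD) hgAD hw
        have hbm : -(m : ℤ) ≤ c.2 := by
          have h2 := inAD_iff.mp (show inAD m (c.1, c.2) from hAD)
          split_ifs at h2 <;> omega
        have hmb : 0 ≤ -c.2 - 1 := by omega
        have hiltm : (-c.2 - 1).toNat < m := by omega
        set i : Fin m := ⟨(-c.2 - 1).toNat, hiltm⟩ with hi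
        have hizv : ((i : ℕ) : ℤ) = -c.2 - 1 := Int.toNat_of_nonneg hmb
        have hcq : c = qs m ((i : ℕ) : ℤ) := by
          rw [Prod.ext_iff]
          simp only [qs_fst, qs_snd]
          exact ⟨by omega, by omega⟩
        have hport : c ∈ dPorts (qs m ((i : ℕ) : ℤ)) (P i) := by
          rw [hcq]; exact self_mem_dPorts _ _
        exact hcov (port_covered hD i hport hAD)

lemma recon_inside (hD : DCond m P) :
    ∀ d ∈ reconDominoes m P, ∀ c ∈ d.cells, inAD m c := by
  intro d hd c hc
  rcases Finset.mem_union.mp hd with hd | hd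
  · obtain ⟨i, rs, hrs, rfl⟩ := mem_stepDominoes.mp hd
    obtain ⟨r, s⟩ := rs
    exact step_cell_inAD hD i hrs hc
  · obtain ⟨g, hAD, hg, hunc, rfl⟩ := mem_fillers.mp hd
    rw [cells_horiz] at hc
    rcases hc with rfl | rfl
    · exact hAD
    · exact filler_right_inAD hD hAD hg hunc

lemma recon_disjoint (hD : DCond m P) {d d' : Domino}
    (hd : d ∈ reconDominoes m P) (hd' : d' ∈ reconDominoes m P) {c : Cell}
    (hc : c ∈ d.cells) (hc' : c ∈ d'.cells) : d = d' := by
  rcases Finset.mem_union.mp hd with hs | hf <;> rcases Finset.mem_union.mp hd' with hs' | hf'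
  · obtain ⟨i, rs, hrs, rfl⟩ := mem_stepDominoes.mp hs
    obtain ⟨j, rs', hrs', rfl⟩ := mem_stepDominoes.mp hs'
    rcases lt_trichotomy ((i : ℕ) : ℤ) ((j : ℕ) : ℤ) with h | h | h
    · exact absurd (step_cells_disj_cross hD h hrs hrs' hc hc') (by simp)
    · have hij : i = j := Fin.ext (by exact_mod_cast h)
      subst hij
      rw [step_cells_disj_same hrs hrs' hc hc']
    · exact absurd (step_cells_disj_cross hD h hrs' hrs hc' hc) (by simp)
  · exfalso
    obtain ⟨i, rs, hrs, rfl⟩ := mem_stepDominoes.mp hs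
    obtain ⟨g, hAD, hg, hunc, rfl⟩ := mem_fillers.mp hf'
    rw [cells_horiz] at hc'
    rcases hc' with rfl | rfl
    · exact hunc ⟨i, rs, hrs, hc⟩
    · exact filler_partner_uncovered hD hAD hg hunc ⟨i, rs, hrs, hc⟩
  · exfalso
    obtain ⟨i, rs, hrs, rfl⟩ := mem_stepDominoes.mp hs'
    obtain ⟨g, hAD, hg, hunc, rfl⟩ := mem_fillers.mp hf
    rw [cells_horiz] at hc
    rcases hc with rfl | rfl
    · exact hunc ⟨i, rs, hrs, hc'⟩
    · exact filler_partner_uncovered hD hAD hg hunc ⟨i, rs, hrs, hc'⟩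
  · obtain ⟨g, hAD, hg, hunc, rfl⟩ := mem_fillers.mp hf
    obtain ⟨g', hAD', hg', hunc', rfl⟩ := mem_fillers.mp hf'
    rw [cells_horiz] at hc hc'
    have hgg : g = g' := by
      rw [Prod.ext_iff]
      rcases hc with rfl | rfl <;> rcases hc' with h' | h' <;>
        (rw [Prod.ext_iff] at h'; constructor <;> omega)
    rw [hgg]
  
noncomputable def recon (m : ℕ) (P : Fin m → List Step) (hD : DCond m P) : Tiling m where
  dominos := reconDominoes m P
  inside := recon_inside hD
  covers := by
    intro c hc
    obtain ⟨d, hd, hcd⟩ := recon_covers_exists hD hc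
    refine ⟨d, ⟨hd, hcd⟩, ?_⟩
    rintro d' ⟨hd', hcd'⟩
    exact recon_disjoint hD hd' hd hcd' hcd

end Recon3
/-! ### Roundtrip 1 : walking the reconstruction recovers the paths -/

lemma port_in_own_step (r : ℤ × ℤ) (s : Step) : r ∈ (stepDomino (r, s)).cells := by
  cases s with
  | flat =>
    rw [show stepDomino (r, Step.flat) = Domino.horiz r.1 r.2 from rfl, cells_horiz]
    left; rfl
  | up =>
    rw [show stepDomino (r, Step.up) = Domino.vert r.1 r.2 from rfl, cells_vert]
    left; rfl
  | down =>
    rw [show stepDomino (r, Step.down) = Domino.vert r.1 (r.2 - 1) from rfl, cells_vert]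
    right
    rw [Prod.ext_iff]
    exact ⟨rfl, by show r.2 = r.2 - 1 + 1; omega⟩

lemma stepOfD_stepDomino (r : ℤ × ℤ) (s : Step) :
    stepOfD (stepDomino (r, s)) r.2 = s := by
  cases s with
  | flat => rfl
  | up =>
    show stepOfD (Domino.vert r.1 r.2) r.2 = Step.up
    rw [stepOfD, if_pos rfl]
  | down =>
    show stepOfD (Domino.vert r.1 (r.2 - 1)) r.2 = Step.down
    rw [stepOfD, if_neg (by omega)]

section RT1
variable {m : ℕ} {P : Fin m → List Step}

lemma walkAux_recon (hD : DCond m P) (i : Fin m) :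
    ∀ (L' : List Step) (q : ℤ × ℤ) (n : ℕ),
      (∀ rs ∈ stepsAt q L', rs ∈ stepsAt (qs m ((i : ℕ) : ℤ)) (P i)) →
      dEnd q L' = qe m ((i : ℕ) : ℤ) →
      (m : ℤ) - q.1 ≤ n →
      walkAux (recon m P hD) n q = L' := by
  intro L'
  induction L' with
  | nil =>
    intro q n _ hend hfuel
    have hout : ¬ inAD m q := by
      rw [show q = dEnd q [] from rfl, hend]
      exact qe_cell_out (Int.ofNat_nonneg _)
    cases n with
    | zero => rfl
    | succ n => rw [walkAux_succ, if_neg hout]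
  | cons s L'' ih =>
    intro q n hsub hend hfuel
    have hmem : (q, s) ∈ stepsAt (qs m ((i : ℕ) : ℤ)) (P i) := hsub (q, s) (by simp)
    have hAD : inAD m q := step_cell_inAD hD i hmem (port_in_own_step q s)
    have hxle : q.1 ≤ (m : ℤ) - 1 := inAD_x_le (x := q.1) (b := q.2) hAD
    cases n with
    | zero => omega
    | succ n =>
      rw [walkAux_succ, if_pos hAD]
      have hdom : stepDomino (q, s) ∈ (recon m P hD).dominos :=
        Finset.mem_union_left _ (mem_stepDominoes.mpr ⟨i, (q, s), hmem, rfl⟩)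
      have hcd : cellDom (recon m P hD) q = stepDomino (q, s) :=
        cellDom_eq _ hdom (port_in_own_step q s)
      rw [hcd, stepOfD_stepDomino]
      congr 1
      apply ih
      · intro rs hrs
        exact hsub rs (by simp [hrs])
      · exact hend
      · have := dvec_x_pos s
        simp only [Prod.fst_add]
        omega

lemma walk_recon (hD : DCond m P) (i : Fin m) :
    walk (recon m P hD) ((i : ℕ) : ℤ) = P i := by
  apply walkAux_recon hD i
  · intro rs hrs; exact hrs
  · exact hD.1 i
  · simp only [qs_fst]
    have := fin_lt_int i
    omega

end RT1
/-! ### Roundtrip 2 : reconstruction from the walks recovers the tiling -/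

section RT2
variable {m : ℕ} (T : Tiling m)

lemma left_start {p : ℤ × ℤ} (hAD : inAD m p) (hw : (p.1 + p.2 + (m : ℤ)) % 2 = 1)
    (hout : ¬ inAD m (p.1 - 1, p.2)) :
    ∃ i : Fin m, p = qs m ((i : ℕ) : ℤ) := by
  obtain ⟨hb1, hx⟩ := left_boundary (m := m) (x := p.1) (b := p.2)
    (show inAD m (p.1, p.2) from hAD) hout hw
  have hbm : -(m : ℤ) ≤ p.2 := by
    have h2 := inAD_iff.mp (show inAD m (p.1, p.2) from hAD)
    split_ifs at h2 <;> omega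
  have hmb : 0 ≤ -p.2 - 1 := by omega
  have hiltm : (-p.2 - 1).toNat < m := by omega
  set i : Fin m := ⟨(-p.2 - 1).toNat, hiltm⟩ with hi
  have hizv : ((i : ℕ) : ℤ) = -p.2 - 1 := Int.toNat_of_nonneg hmb
  refine ⟨i, ?_⟩
  rw [Prod.ext_iff]
  simp only [qs_fst, qs_snd]
  constructor <;> omega

lemma step_from_port {iz : ℤ} (hiz : 0 ≤ iz) {r : ℤ × ℤ}
    (hr : r ∈ dPorts (qs m iz) (walk T iz)) (hAD : inAD m r) :
    ∃ s, (r, s) ∈ stepsAt (qs m iz) (walk T iz) ∧ stepDomino (r, s) = cellDom T r ∧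
      r + dvec s ∈ dPorts (qs m iz) (walk T iz) := by
  rcases mem_dPorts_outgoing hr with he | ⟨s, hs⟩
  · exfalso
    rw [he] at hAD
    exact (walk_facts T hiz).2.1 hAD
  · exact ⟨s, hs, ((walk_facts T hiz).1 (r, s) hs).2.2.symm, stepsAt_next_mem hs⟩

lemma backward_extension :
    ∀ (n : ℕ) (p : ℤ × ℤ), p.1 + m ≤ n → inAD m p → (p.1 + p.2 + (m : ℤ)) % 2 = 1 →
      (p.1 - 1, p.2) ∉ (cellDom T p).cells →
      ∃ i : Fin m, p ∈ dPorts (qs m ((i : ℕ) : ℤ)) (walk T ((i : ℕ) : ℤ)) := by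
  intro n
  induction n with
  | zero =>
    intro p hn hAD hw _
    have hout : ¬ inAD m (p.1 - 1, p.2) := by
      intro hc
      have := inAD_x_ge (x := p.1 - 1) (b := p.2) hc
      omega
    obtain ⟨i, rfl⟩ := left_start hAD hw hout
    exact ⟨i, self_mem_dPorts _ _⟩
  | succ n ih =>
    intro p hn hAD hw hfree
    by_cases hout : inAD m (p.1 - 1, p.2)
    · obtain ⟨hd', hcell'⟩ := cellDom_spec T hout
      have hnotp : p ∉ (cellDom T (p.1 - 1, p.2)).cells := by
        intro hc
        have he := cellDom_eq T hd' hc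
        rw [he] at hfree
        exact hfree hcell'
      cases hdm : cellDom T (p.1 - 1, p.2) with
      | horiz a b =>
        rw [hdm, cells_horiz] at hcell' hnotp
        have hab : b = p.2 ∧ a = p.1 - 2 := by
          rcases hcell' with h | h
          · exfalso
            rw [Prod.ext_iff] at h
            apply hnotp
            right
            rw [Prod.ext_iff]
            exact ⟨by omega, by omega⟩
          · rw [Prod.ext_iff] at h
            exact ⟨by omega, by omega⟩
        obtain ⟨rfl, rfl⟩ := hab
        have hmem2 : ((p.1 - 2 : ℤ), p.2) ∈ (cellDom T (p.1 - 1, p.2)).cells := by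
          rw [hdm, cells_horiz]; left; rfl
        have hP'AD : inAD m (p.1 - 2, p.2) := T.inside _ hd' _ hmem2
        have hcdp' : cellDom T (p.1 - 2, p.2) = cellDom T (p.1 - 1, p.2) :=
          cellDom_eq T hd' hmem2
        have hfree' : ((p.1 - 2 : ℤ), p.2).1 - 1 ∉ ({} : Set ℤ) → True := fun _ => trivial
        obtain ⟨i, hmem⟩ := ih (p.1 - 2, p.2) (by omega) hP'AD (by
            show (p.1 - 2 + p.2 + (m : ℤ)) % 2 = 1
            omega)
          (by
            show (((p.1 - 2 : ℤ), p.2).1 - 1, ((p.1 - 2 : ℤ), p.2).2) ∉ _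
            rw [hcdp', hdm]
            intro hc
            rw [cells_horiz] at hc
            rcases hc with h | h <;> (rw [Prod.ext_iff] at h; omega))
        obtain ⟨s, hst, hsd, hnext⟩ := step_from_port T (Int.ofNat_nonneg _) hmem hP'AD
        rw [hcdp', hdm] at hsd
        have hsflat : s = Step.flat := by
          cases s
          · exact absurd hsd (by
              show Domino.vert _ _ ≠ _
              intro hc; exact Domino.noConfusion hc)
          · exact absurd hsd (by
              show Domino.vert _ _ ≠ _
              intro hc; exact Domino.noConfusion hc)
          · rfl
        subst hsflat
        refine ⟨i, ?_⟩
        have heq : ((p.1 - 2 : ℤ), p.2) + dvec Step.flat = p := by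
          have e1 : (((p.1 - 2 : ℤ), p.2) + dvec Step.flat).1 = p.1 - 2 + 2 := rfl
          have e2 : (((p.1 - 2 : ℤ), p.2) + dvec Step.flat).2 = p.2 + 0 := rfl
          rw [Prod.ext_iff]
          exact ⟨by omega, by omega⟩
        rw [heq] at hnext
        exact hnext
      | vert a b' =>
        rw [hdm, cells_vert] at hcell' hnotp
        have ha : a = p.1 - 1 := by
          rcases hcell' with h | h <;> (rw [Prod.ext_iff] at h; omega)
        subst ha
        have hb : b' = p.2 ∨ b' = p.2 - 1 := by
          rcases hcell' with h | h <;> (rw [Prod.ext_iff] at h; omega)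
        rcases hb with rfl | rfl
        · -- down-arrival : predecessor (p.1 - 1, p.2 + 1)
          have hmem2 : ((p.1 - 1 : ℤ), p.2 + 1) ∈ (cellDom T (p.1 - 1, p.2)).cells := by
            rw [hdm, cells_vert]; right; rfl
          have hP'AD : inAD m (p.1 - 1, p.2 + 1) := T.inside _ hd' _ hmem2
          have hcdp' : cellDom T (p.1 - 1, p.2 + 1) = cellDom T (p.1 - 1, p.2) :=
            cellDom_eq T hd' hmem2
          obtain ⟨i, hmem⟩ := ih (p.1 - 1, p.2 + 1) (by omega) hP'AD (by
              show (p.1 - 1 + (p.2 + 1) + (m : ℤ)) % 2 = 1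
              omega)
            (by
              show (((p.1 - 1 : ℤ), p.2 + 1).1 - 1, ((p.1 - 1 : ℤ), p.2 + 1).2) ∉ _
              rw [hcdp', hdm]
              intro hc
              rw [cells_vert] at hc
              rcases hc with h | h <;> (rw [Prod.ext_iff] at h; omega))
          obtain ⟨s, hst, hsd, hnext⟩ := step_from_port T (Int.ofNat_nonneg _) hmem hP'AD
          rw [hcdp', hdm] at hsd
          have hsdown : s = Step.down := by
            cases s
            · exfalso
              rw [show stepDomino ((p.1 - 1, p.2 + 1), Step.up)
                  = Domino.vert (p.1 - 1) (p.2 + 1) from rfl, Domino.vert.injEq] at hsd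
              omega
            · rfl
            · exact absurd hsd (by
                show Domino.horiz _ _ ≠ _
                intro hc; exact Domino.noConfusion hc)
          subst hsdown
          refine ⟨i, ?_⟩
          have heq : ((p.1 - 1 : ℤ), p.2 + 1) + dvec Step.down = p := by
            have e1 : (((p.1 - 1 : ℤ), p.2 + 1) + dvec Step.down).1 = p.1 - 1 + 1 := rfl
            have e2 : (((p.1 - 1 : ℤ), p.2 + 1) + dvec Step.down).2 = p.2 + 1 + -1 := rfl
            rw [Prod.ext_iff]
            exact ⟨by omega, by omega⟩
          rw [heq] at hnext
          exact hnext
        · -- up-arrival : predecessor (p.1 - 1, p.2 - 1)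
          have hmem2 : ((p.1 - 1 : ℤ), p.2 - 1) ∈ (cellDom T (p.1 - 1, p.2)).cells := by
            rw [hdm, cells_vert]; left; rfl
          have hP'AD : inAD m (p.1 - 1, p.2 - 1) := T.inside _ hd' _ hmem2
          have hcdp' : cellDom T (p.1 - 1, p.2 - 1) = cellDom T (p.1 - 1, p.2) :=
            cellDom_eq T hd' hmem2
          obtain ⟨i, hmem⟩ := ih (p.1 - 1, p.2 - 1) (by omega) hP'AD (by
              show (p.1 - 1 + (p.2 - 1) + (m : ℤ)) % 2 = 1
              omega)
            (by
              show (((p.1 - 1 : ℤ), p.2 - 1).1 - 1, ((p.1 - 1 : ℤ), p.2 - 1).2) ∉ _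
              rw [hcdp', hdm]
              intro hc
              rw [cells_vert] at hc
              rcases hc with h | h <;> (rw [Prod.ext_iff] at h; omega))
          obtain ⟨s, hst, hsd, hnext⟩ := step_from_port T (Int.ofNat_nonneg _) hmem hP'AD
          rw [hcdp', hdm] at hsd
          have hsup : s = Step.up := by
            cases s
            · rfl
            · exfalso
              rw [show stepDomino ((p.1 - 1, p.2 - 1), Step.down)
                  = Domino.vert (p.1 - 1) (p.2 - 1 - 1) from rfl, Domino.vert.injEq] at hsd
              omega
            · exact absurd hsd (by
                show Domino.horiz _ _ ≠ _
                intro hc; exact Domino.noConfusion hc)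
          subst hsup
          refine ⟨i, ?_⟩
          have heq : ((p.1 - 1 : ℤ), p.2 - 1) + dvec Step.up = p := by
            have e1 : (((p.1 - 1 : ℤ), p.2 - 1) + dvec Step.up).1 = p.1 - 1 + 1 := rfl
            have e2 : (((p.1 - 1 : ℤ), p.2 - 1) + dvec Step.up).2 = p.2 - 1 + 1 := rfl
            rw [Prod.ext_iff]
            exact ⟨by omega, by omega⟩
          rw [heq] at hnext
          exact hnext
    · obtain ⟨i, rfl⟩ := left_start hAD hw hout
      exact ⟨i, self_mem_dPorts _ _⟩

lemma carrying_on_walk {d : Domino} (hd : d ∈ T.dominos) :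
    (∃ a b : ℤ, d = Domino.horiz a b ∧ (a + b + (m : ℤ)) % 2 = 0) ∨
    ∃ i : Fin m, ∃ rs ∈ stepsAt (qs m ((i : ℕ) : ℤ)) (walk T ((i : ℕ) : ℤ)),
      stepDomino rs = d := by
  have main : ∀ p : ℤ × ℤ, inAD m p → (p.1 + p.2 + (m : ℤ)) % 2 = 1 →
      cellDom T p = d → (p.1 - 1, p.2) ∉ d.cells →
      ∃ i : Fin m, ∃ rs ∈ stepsAt (qs m ((i : ℕ) : ℤ)) (walk T ((i : ℕ) : ℤ)),
        stepDomino rs = d := by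
    intro p hAD hw hcd hfr
    obtain ⟨i, hmem⟩ := backward_extension T (p.1 + m).toNat p
      (Int.self_le_toNat _) hAD hw (by rw [hcd]; exact hfr)
    obtain ⟨s, hst, hsd, _⟩ := step_from_port T (Int.ofNat_nonneg _) hmem hAD
    exact ⟨i, (p, s), hst, by rw [hsd, hcd]⟩
  cases d with
  | horiz a b =>
    rcases Int.emod_two_eq (a + b + m) with hg | hwht
    · exact Or.inl ⟨a, b, rfl, hg⟩
    · refine Or.inr (main (a, b) ?_ hwht ?_ ?_)
      · exact T.inside _ hd _ (by rw [cells_horiz]; left; rfl)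
      · exact cellDom_eq T hd (by rw [cells_horiz]; left; rfl)
      · rw [cells_horiz]
        rintro (h | h) <;> (rw [Prod.ext_iff] at h; omega)
  | vert a b =>
    right
    rcases Int.emod_two_eq (a + b + m) with hg | hwht
    · -- bottom gray, top white
      refine main (a, b + 1) ?_ (by show (a + (b + 1) + (m : ℤ)) % 2 = 1; omega) ?_ ?_
      · exact T.inside _ hd _ (by rw [cells_vert]; right; rfl)
      · exact cellDom_eq T hd (by rw [cells_vert]; right; rfl)
      · rw [cells_vert]
        rintro (h | h) <;> (rw [Prod.ext_iff] at h; omega)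
    · refine main (a, b) ?_ hwht ?_ ?_
      · exact T.inside _ hd _ (by rw [cells_vert]; left; rfl)
      · exact cellDom_eq T hd (by rw [cells_vert]; left; rfl)
      · rw [cells_vert]
        rintro (h | h) <;> (rw [Prod.ext_iff] at h; omega)

lemma recon_walk_eq :
    reconDominoes m (fun i => walk T ((i : ℕ) : ℤ)) = T.dominos := by
  apply Finset.ext
  intro d
  constructor
  · intro hd
    rcases Finset.mem_union.mp hd with hs | hf
    · obtain ⟨i, rs, hrs, rfl⟩ := mem_stepDominoes.mp hs
      obtain ⟨r, s⟩ := rs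
      exact walk_step_dom T (Int.ofNat_nonneg _) hrs
    · obtain ⟨g, hAD, hg, hunc, rfl⟩ := mem_fillers.mp hf
      have hgl : g ∈ (Domino.horiz g.1 g.2).cells := by rw [cells_horiz]; left; rfl
      obtain ⟨hd0, hc0⟩ := cellDom_spec T hAD
      rcases carrying_on_walk T hd0 with ⟨a, b, hda, hpar⟩ | ⟨i, rs, hrs, hsd⟩
      · -- cellDom T g is a gray-left horizontal : it must be horiz g.1 g.2
        rw [hda, cells_horiz] at hc0
        have : g = (a, b) := by
          rcases hc0 with h | h
          · exact h
          · exfalso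
            rw [Prod.ext_iff] at h
            omega
        have hgd : Domino.horiz g.1 g.2 = cellDom T g := by
          rw [hda, this]
        rw [hgd]
        exact hd0
      · exfalso
        apply hunc
        exact ⟨i, rs, hrs, by rw [hsd]; exact hc0⟩
  · intro hd
    rcases carrying_on_walk T hd with ⟨a, b, rfl, hpar⟩ | ⟨i, rs, hrs, hsd⟩
    · apply Finset.mem_union_right
      apply mem_fillers.mpr
      have hADl : inAD m ((a : ℤ), b) := T.inside _ hd _ (by rw [cells_horiz]; left; rfl)
      refine ⟨(a, b), hADl, hpar, ?_, rfl⟩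
      intro hcov
      obtain ⟨i, ⟨r, s⟩, hrs, hc⟩ := hcov
      have hstep := walk_step_dom T (Int.ofNat_nonneg _) hrs
      have heq : stepDomino ((r, s)) = Domino.horiz a b := by
        have e1 := cellDom_eq T hstep hc
        have e2 := cellDom_eq T hd (show ((a : ℤ), b) ∈ (Domino.horiz a b).cells by
          rw [cells_horiz]; left; rfl)
        rw [← e1, e2]
      have hpp : (r.1 + r.2 + (m : ℤ)) % 2 = 1 := port_parity (stepsAt_port_mem hrs)
      cases s with
      | flat =>
        rw [show stepDomino ((r, Step.flat)) = Domino.horiz r.1 r.2 from rfl,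
          Domino.horiz.injEq] at heq
        omega
      | up => exact Domino.noConfusion heq
      | down => exact Domino.noConfusion heq
    · apply Finset.mem_union_left
      exact mem_stepDominoes.mpr ⟨i, rs, hrs, hsd⟩

lemma tiling_ext {T T' : Tiling m} (h : T.dominos = T'.dominos) : T = T' := by
  cases T
  cases T'
  simp only at h
  subst h
  rfl

end RT2
/-! ### The equivalence and the main theorem -/

noncomputable def tilingEquiv (m : ℕ) : Tiling m ≃ {P : Fin m → List Step // Cond m P} where
  toFun T := ⟨fun i => walk T ((i : ℕ) : ℤ), cond_of_dcond (walk_dcond T)⟩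
  invFun Pc := recon m Pc.1 (dcond_of_cond Pc.2)
  left_inv T := tiling_ext (by
    show reconDominoes m (fun i => walk T ((i : ℕ) : ℤ)) = T.dominos
    exact recon_walk_eq T)
  right_inv Pc := Subtype.ext (funext fun i => walk_recon _ i)
/-- The number of domino tilings of the Aztec diamond of rank `m` equals the number of
`m`-tuples of pairwise disjoint Schröder-type paths, where the `i`-th path runs from
`(-m-1+i, 1/2-i)` to `(m+1-i, 1/2-i)` and never passes strictly below the line
`y = 1/2 - i`. -/
theorem aztec_schroeder_paths (m : ℕ) (hm : 1 ≤ m) :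
    Nat.card (Tiling m) =
      Nat.card {P : Fin m → List Step //
        (∀ i : Fin m, endpt (startPt m i) (P i) = finishPt m i) ∧
        (∀ i : Fin m, ∀ q ∈ pathSet (startPt m i) (P i),
          1 / 2 - (((i : ℕ) : ℝ) + 1) ≤ q.2) ∧
        (∀ i j : Fin m, i ≠ j →
          Disjoint (pathSet (startPt m i) (P i)) (pathSet (startPt m j) (P j)))} := by
  exact Nat.card_congr (tilingEquiv m)

end Aztec
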